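/- arXiv:1904.05174 — 7 statements merged into one kernel-verified Lean document; each statement's English description precedes it below -/
import Mathlib

section
/- Let p be an odd prime and n ≥ 1. In the holomorph Hol(D) of the dihedral group D = DihedralGroup(p^n) of order 2p^n, there exists a subgroup C that is cyclic of order 2p^n, acts regularly on D, and whose normalizer in Equiv.Perm D is contained in Hol(D). -/
/-- The holomorph of a group `X`: the normalizer in `Equiv.Perm X` of the image of the
left regular representation of `X`. -/
def Hol (X : Type*) [Group X] : Subgroup (Equiv.Perm X) :=
  Subgroup.normalizer ((MulAction.toPermHom X X).range : Set (Equiv.Perm X))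

/-- A subgroup `S` of `Equiv.Perm X` acts regularly on `X`: the action is transitive and
the stabilizer of every point is trivial. -/
def IsRegularSubgroup {X : Type*} (S : Subgroup (Equiv.Perm X)) : Prop :=
  (∀ x y : X, ∃ s ∈ S, s x = y) ∧ ∀ s ∈ S, ∀ x : X, s x = x → s = 1

/-!
In the coordinates `r j ↦ (0, j)`, `sr j ↦ (1, j)` on `ZMod 2 × ZMod m`, left multiplication by
`(δ, a)` in `DihedralGroup m` becomes `(ε, j) ↦ (ε + δ, j + (-1) ^ ε • a)`. For odd `m` the additive
group `ZMod 2 × ZMod m` is cyclic, generated by `1 = (1, 1)`, and its translations form a cyclic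
regular subgroup `C` of order `2 m`. A permutation normalizing a cyclic group of translations is
affine, `x ↦ u • x + b`; injectivity forces `u` to be odd, so it fixes the `ZMod 2` coordinate, and
conjugating the left multiplication by `(δ, a)` gives the left multiplication by `(δ, ± u a)`.
Hence the normalizer of `C` normalizes the left regular representation, i.e. lies in `Hol`.
-/

open Equiv Subgroup

namespace IsRegularSubgroup

variable {α β : Type*} {S : Subgroup (Perm α)}

theorem map_permCongrHom (hS : IsRegularSubgroup S) (e : α ≃ β) :
    IsRegularSubgroup (S.map e.permCongrHom.toMonoidHom) := by
  refine ⟨fun x y => ?_, ?_⟩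
  · obtain ⟨s, hs, hsxy⟩ := hS.1 (e.symm x) (e.symm y)
    exact ⟨_, mem_map_of_mem _ hs, by simp [permCongrHom_coe, hsxy]⟩
  · rintro _ ⟨s, hs, rfl⟩ x hx
    have hfix : s (e.symm x) = e.symm x := by
      simpa [permCongrHom_coe, eq_symm_apply] using hx
    rw [hS.2 s hs _ hfix, map_one]

theorem nat_card_eq (hS : IsRegularSubgroup S) (a : α) : Nat.card S = Nat.card α := by
  refine Nat.card_eq_of_bijective (fun s : S => (s : Perm α) a) ⟨fun s t hst => ?_, fun y => ?_⟩
  · have hfix : ((s : Perm α)⁻¹ * t) a = a := by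
      simp only at hst
      rw [Perm.mul_apply, ← hst, Perm.inv_def, symm_apply_apply]
    exact Subtype.ext (inv_mul_eq_one.mp (hS.2 _ (mul_mem (inv_mem s.2) t.2) a hfix))
  · obtain ⟨s, hs, hsy⟩ := hS.1 a y
    exact ⟨⟨s, hs⟩, hsy⟩

end IsRegularSubgroup

section CyclicTranslations

variable {A : Type*} [AddGroup A] {g : A}

theorem isRegularSubgroup_zpowers_addLeft (hg : ∀ x, x ∈ AddSubgroup.zmultiples g) :
    IsRegularSubgroup (zpowers (Equiv.addLeft g)) := by
  refine ⟨fun x y => ?_, ?_⟩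
  · obtain ⟨k, hk⟩ := AddSubgroup.mem_zmultiples_iff.mp (hg (y - x))
    exact ⟨_, zpow_mem (mem_zpowers _) k, by simp [zsmul_addLeft, hk]⟩
  · rintro _ ⟨k, rfl⟩ x hx
    have hk : k • g = 0 := by simpa using hx
    simp [hk]

theorem exists_apply_eq_zsmul_add_of_mem_normalizer_zpowers_addLeft
    (hg : ∀ x, x ∈ AddSubgroup.zmultiples g) {f : Perm A}
    (hf : f ∈ normalizer (zpowers (Equiv.addLeft g) : Set (Perm A))) :
    ∃ u : ℤ, ∀ x, f x = u • x + f 0 := by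
  obtain ⟨u, hu⟩ :=
    mem_zpowers_iff.mp ((mem_normalizer_iff.mp hf _).mp (mem_zpowers (Equiv.addLeft g)))
  have hsemiconj : SemiconjBy f (Equiv.addLeft g) (Equiv.addLeft (u • g)) := by
    rw [← zsmul_addLeft, hu, SemiconjBy, inv_mul_cancel_right]
  refine ⟨u, fun x => ?_⟩
  obtain ⟨k, rfl⟩ := AddSubgroup.mem_zmultiples_iff.mp (hg x)
  have := congrArg (· 0) (hsemiconj.zpow_right k)
  simpa [zsmul_comm g u k] using this

end CyclicTranslations

namespace ZMod

theorem eq_zero_or_eq_one : ∀ ε : ZMod 2, ε = 0 ∨ ε = 1 := by decide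

theorem mem_zmultiples_one_of_odd {m : ℕ} (hm : Odd m) (x : ZMod 2 × ZMod m) :
    x ∈ AddSubgroup.zmultiples 1 := by
  let e := chineseRemainder (Nat.coprime_two_left.mpr hm)
  obtain ⟨y, rfl⟩ := e.surjective x
  refine AddSubgroup.mem_zmultiples_iff.mpr ⟨(y.cast : ℤ), ?_⟩
  rw [zsmul_one, ← map_intCast e, intCast_zmod_cast]

end ZMod

namespace DihedralGroup

variable {m : ℕ}

def prodEquiv (m : ℕ) : ZMod 2 × ZMod m ≃ DihedralGroup m where
  toFun x := if x.1 = 0 then r x.2 else sr x.2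
  invFun
    | r j => (0, j)
    | sr j => (1, j)
  left_inv := by
    rintro ⟨ε, j⟩
    rcases ZMod.eq_zero_or_eq_one ε with rfl | rfl <;> simp
  right_inv := by
    rintro (j | j) <;> simp

def mulLeftCoords (δ : ZMod 2) (a : ZMod m) : Perm (ZMod 2 × ZMod m) where
  toFun x := (x.1 + δ, x.2 + (-1 : ℤˣ) ^ x.1 • a)
  invFun x := (x.1 + δ, x.2 - (-1 : ℤˣ) ^ (x.1 + δ) • a)
  left_inv := by
    rintro ⟨ε, j⟩
    simp [add_assoc, CharTwo.add_self_eq_zero]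
  right_inv := by
    rintro ⟨ε, j⟩
    simp [add_assoc, CharTwo.add_self_eq_zero]

theorem permCongrHom_mulLeftCoords (δ : ZMod 2) (a : ZMod m) :
    (prodEquiv m).permCongrHom (mulLeftCoords δ a)
      = MulAction.toPermHom (DihedralGroup m) (DihedralGroup m) (prodEquiv m (δ, a)) := by
  ext x
  rcases ZMod.eq_zero_or_eq_one δ with rfl | rfl <;> rcases x with j | j <;>
    simp [permCongrHom_coe, prodEquiv, mulLeftCoords, sub_eq_add_neg, add_comm,
      CharTwo.add_self_eq_zero]

theorem mulLeftCoords_semiconj {f : Perm (ZMod 2 × ZMod m)} {c : ZMod 2} {u b : ZMod m}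
    (hf : ∀ x, f x = (x.1 + c, u * x.2 + b)) (δ : ZMod 2) (a : ZMod m) :
    f * mulLeftCoords δ a = mulLeftCoords δ ((-1 : ℤˣ) ^ c • u * a) * f := by
  ext ⟨ε, j⟩
  · simp [hf, mulLeftCoords, add_right_comm]
  · have hsign : (-1 : ℤˣ) ^ (ε + c) * (-1) ^ c = (-1) ^ ε := by
      rw [uzpow_add, mul_assoc, Int.units_mul_self, mul_one]
    simp only [Perm.mul_apply, hf, mulLeftCoords, coe_fn_mk, mul_add, ← hsign, mul_smul,
      mul_smul_comm, smul_mul_assoc]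
    abel

theorem exists_eq_affine_of_mem_normalizer (hm : Odd m) {f : Perm (ZMod 2 × ZMod m)}
    (hf : f ∈ normalizer (zpowers (Equiv.addLeft (1 : ZMod 2 × ZMod m)) : Set _)) :
    ∃ c u b, ∀ x, f x = (x.1 + c, u * x.2 + b) := by
  obtain ⟨k, hk⟩ := exists_apply_eq_zsmul_add_of_mem_normalizer_zpowers_addLeft
    (ZMod.mem_zmultiples_one_of_odd hm) hf
  have hk_odd : (k : ZMod 2) = 1 := by
    refine (ZMod.eq_zero_or_eq_one _).resolve_left fun hk_even => ?_
    have : f (1, 0) = f 0 := by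
      rw [hk (1, 0), hk 0]
      ext <;> simp [zsmul_eq_mul, hk_even]
    simpa using f.injective this
  refine ⟨(f 0).1, k, (f 0).2, fun x => ?_⟩
  rw [hk x]
  ext <;> simp [zsmul_eq_mul, hk_odd]

def leftRegularCoords (m : ℕ) : Subgroup (Perm (ZMod 2 × ZMod m)) :=
  (MulAction.toPermHom (DihedralGroup m) (DihedralGroup m)).range.comap
    (prodEquiv m).permCongrHom.toMonoidHom

theorem mem_leftRegularCoords {σ : Perm (ZMod 2 × ZMod m)} :
    σ ∈ leftRegularCoords m ↔ ∃ δ a, mulLeftCoords δ a = σ := by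
  simp only [leftRegularCoords, mem_comap, MonoidHom.mem_range]
  constructor
  · rintro ⟨d, hd⟩
    refine ⟨((prodEquiv m).symm d).1, ((prodEquiv m).symm d).2,
      (prodEquiv m).permCongrHom.injective ?_⟩
    rw [permCongrHom_mulLeftCoords, Prod.mk.eta, apply_symm_apply, hd]
    rfl
  · rintro ⟨δ, a, rfl⟩
    exact ⟨_, (permCongrHom_mulLeftCoords δ a).symm⟩

theorem normalizer_zpowers_addLeft_one_le (hm : Odd m) :
    normalizer (zpowers (Equiv.addLeft (1 : ZMod 2 × ZMod m)) : Set _) ≤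
      normalizer (leftRegularCoords m : Set (Perm (ZMod 2 × ZMod m))) := by
  have : NeZero m := ⟨hm.pos.ne'⟩
  intro f hf
  obtain ⟨c, u, b, hfx⟩ := exists_eq_affine_of_mem_normalizer hm hf
  refine mem_normalizer_fintype fun σ hσ => ?_
  obtain ⟨δ, a, rfl⟩ := mem_leftRegularCoords.mp hσ
  exact mem_leftRegularCoords.mpr
    ⟨δ, _, (mul_inv_eq_of_eq_mul (mulLeftCoords_semiconj hfx δ a)).symm⟩

theorem exists_isCyclic_isRegularSubgroup_normalizer_le_hol (hm : Odd m) :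
    ∃ C : Subgroup (Perm (DihedralGroup m)),
      C ≤ Hol (DihedralGroup m) ∧ IsCyclic C ∧ Nat.card C = 2 * m ∧
      IsRegularSubgroup C ∧
      normalizer (C : Set (Perm (DihedralGroup m))) ≤ Hol (DihedralGroup m) := by
  set Φ := (prodEquiv m).permCongrHom
  set C := (zpowers (Equiv.addLeft (1 : ZMod 2 × ZMod m))).map Φ.toMonoidHom
  have hnorm : normalizer (C : Set _) ≤ Hol (DihedralGroup m) := by
    rw [Hol, ← map_comap_eq_self_of_surjective (f := Φ.toMonoidHom) Φ.surjective
      (MonoidHom.range _), ← map_equiv_normalizer_eq, ← map_equiv_normalizer_eq]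
    exact map_mono (normalizer_zpowers_addLeft_one_le hm)
  have hreg : IsRegularSubgroup C :=
    (isRegularSubgroup_zpowers_addLeft (ZMod.mem_zmultiples_one_of_odd hm)).map_permCongrHom _
  refine ⟨C, le_normalizer.trans hnorm, ?_, ?_, hreg, hnorm⟩
  · rw [show C = _ from MonoidHom.map_zpowers _ _]
    infer_instance
  · rw [hreg.nat_card_eq 1, nat_card]

end DihedralGroup

theorem cyclic_regular_in_hol_dihedral_general (p n : ℕ) (hodd : Odd p) :
    ∃ C : Subgroup (Equiv.Perm (DihedralGroup (p ^ n))),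
      C ≤ Hol (DihedralGroup (p ^ n)) ∧
      IsCyclic C ∧ Nat.card C = 2 * p ^ n ∧
      IsRegularSubgroup C ∧
      Subgroup.normalizer (C : Set (Equiv.Perm (DihedralGroup (p ^ n)))) ≤ Hol (DihedralGroup (p ^ n)) :=
  DihedralGroup.exists_isCyclic_isRegularSubgroup_normalizer_le_hol hodd.pow

/-- In the holomorph of the dihedral group `D = DihedralGroup (p ^ n)` of order `2 p ^ n`
(`p` an odd prime, `n ≥ 1`) there is a cyclic subgroup of order `2 p ^ n` acting regularly
on `D` whose normalizer in `Equiv.Perm D` is contained in the holomorph. -/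
theorem cyclic_regular_in_hol_dihedral (p n : ℕ) (hp : p.Prime) (hodd : Odd p) (hn : 1 ≤ n) :
    ∃ C : Subgroup (Equiv.Perm (DihedralGroup (p ^ n))),
      C ≤ Hol (DihedralGroup (p ^ n)) ∧
      IsCyclic C ∧ Nat.card C = 2 * p ^ n ∧
      IsRegularSubgroup C ∧
      Subgroup.normalizer (C : Set (Equiv.Perm (DihedralGroup (p ^ n)))) ≤ Hol (DihedralGroup (p ^ n)) :=
  cyclic_regular_in_hol_dihedral_general p n hodd
end

section
/- (Theorem 3.1) Let p be an odd prime and n ≥ 1. Let G be a finite group and G' ≤ G a subgroup of index 2p^n, and let λ : G → Equiv.Perm (G ⧸ G') be the action by left translation on left cosets. If there exists a regular subgroup N of Equiv.Perm (G ⧸ G') isomorphic to the cyclic group of order 2p^n that is normalized by λ(G), then there exists a regular subgroup M of Equiv.Perm (G ⧸ G') isomorphic to DihedralGroup(p^n) that is normalized by λ(G). -/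
open Equiv Subgroup

lemma zpow_eq_zpow_of_intCast_eq {H : Type*} [Group H] {m : ℕ} {a : H} (ha : a ^ m = 1)
    {x y : ℤ} (hxy : (x : ZMod m) = y) : a ^ x = a ^ y := by
  rw [zpow_eq_zpow_emod' x ha, zpow_eq_zpow_emod' y ha, (ZMod.intCast_eq_intCast_iff' x y m).mp hxy]

namespace DihedralGroup

variable {m : ℕ} {H : Type*} [Group H] {a b : H}

def lift (ha : a ^ m = 1) (hb : b * b = 1) (hba : b * a * b⁻¹ = a⁻¹) :
    DihedralGroup m →* H where
  toFun
    | r i => a ^ (i.cast : ℤ)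
    | sr i => b * a ^ (i.cast : ℤ)
  map_one' := by rw [one_def]; simp
  map_mul' := by
    have hcast : ∀ {x : ℤ} {i : ZMod m}, (x : ZMod m) = i → a ^ (i.cast : ℤ) = a ^ x :=
      fun h ↦ zpow_eq_zpow_of_intCast_eq ha (by rw [h, ZMod.intCast_zmod_cast])
    have hba' (z : ℤ) : b * a ^ z = a ^ (-z) * b := by
      rw [← mul_inv_eq_iff_eq_mul, ← conj_zpow, hba, inv_zpow, zpow_neg]
    have hab (z : ℤ) : a ^ z * b = b * a ^ (-z) := by rw [hba', neg_neg]
    rintro (i | i) (j | j) <;>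
      simp only [r_mul_r, r_mul_sr, sr_mul_r, sr_mul_sr, ← mul_assoc, hab, hb, one_mul,
        mul_assoc b, ← zpow_add] <;>
      first
      | exact hcast (by push_cast [ZMod.intCast_zmod_cast]; ring)
      | exact congrArg (b * ·) (hcast (by push_cast [ZMod.intCast_zmod_cast]; ring))

@[simp] lemma lift_r (ha : a ^ m = 1) (hb : b * b = 1) (hba : b * a * b⁻¹ = a⁻¹) (i : ZMod m) :
    lift ha hb hba (r i) = a ^ (i.cast : ℤ) := rfl

@[simp] lemma lift_sr (ha : a ^ m = 1) (hb : b * b = 1) (hba : b * a * b⁻¹ = a⁻¹) (i : ZMod m) :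
    lift ha hb hba (sr i) = b * a ^ (i.cast : ℤ) := rfl

lemma mem_range_lift (ha : a ^ m = 1) (hb : b * b = 1) (hba : b * a * b⁻¹ = a⁻¹) {x : H} :
    x ∈ (lift ha hb hba).range ↔ ∃ z : ℤ, x = a ^ z ∨ x = b * a ^ z := by
  have hcast (z : ℤ) : a ^ ((z : ZMod m).cast : ℤ) = a ^ z :=
    zpow_eq_zpow_of_intCast_eq ha (ZMod.intCast_zmod_cast _)
  constructor
  · rintro ⟨i | i, rfl⟩
    exacts [⟨_, .inl rfl⟩, ⟨_, .inr rfl⟩]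
  · rintro ⟨z, rfl | rfl⟩
    exacts [⟨r z, hcast z⟩, ⟨sr z, congrArg (b * ·) (hcast z)⟩]

lemma lift_injective (ha : a ^ m = 1) (hb : b * b = 1) (hba : b * a * b⁻¹ = a⁻¹)
    (hord : orderOf a = m) (hbA : b ∉ zpowers a) : Function.Injective (lift ha hb hba) := by
  refine (injective_iff_map_eq_one _).mpr ?_
  rintro (i | i) h
  · rw [lift_r, ← orderOf_dvd_iff_zpow_eq_one, hord, ← ZMod.intCast_zmod_eq_zero_iff_dvd,
      ZMod.intCast_zmod_cast] at h
    rw [h, r_zero]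
  · rw [lift_sr, mul_eq_one_iff_eq_inv, ← zpow_neg] at h
    exact absurd (h ▸ zpow_mem_zpowers a _) hbA

end DihedralGroup

section CyclicOfEvenOrder

variable {G : Type*} [Group G] {δ : G}

lemma even_of_zpow_eq_mul_self (hδ : Even (orderOf δ)) {μ : G} (hμ : μ ∈ zpowers δ) {j : ℤ}
    (h : δ ^ j = μ * μ) : Even j := by
  obtain ⟨i, rfl⟩ := mem_zpowers_iff.mp hμ
  rw [← zpow_add, zpow_eq_zpow_iff_modEq, Int.modEq_iff_dvd] at h
  have hdvd : (2 : ℤ) ∣ i + i - j :=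
    (Int.natCast_dvd_natCast.mpr (even_iff_two_dvd.mp hδ)).trans h
  exact even_iff_two_dvd.mpr (by omega)

lemma conj_pow_eq_of_mem_normalizer_zpowers {m : ℕ} (hδ : δ ^ (2 * m) = 1) {h : G}
    (hh : h ∈ normalizer (zpowers δ : Set G)) : h * δ ^ m * h⁻¹ = δ ^ m := by
  obtain ⟨k, hk⟩ := mem_zpowers_iff.mp ((mem_normalizer_iff.mp hh δ).mp (mem_zpowers δ))
  have hτ : (δ ^ m) ^ (2 : ℤ) = 1 := by rw [zpow_two, ← pow_add, ← two_mul, hδ]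
  have hconj : h * δ ^ m * h⁻¹ = (δ ^ m) ^ k := by
    rw [← conj_pow, ← hk, ← zpow_natCast, ← zpow_natCast, ← zpow_mul, ← zpow_mul, mul_comm]
  rcases Int.even_or_odd' k with ⟨t, rfl | rfl⟩
  · rw [zpow_mul, hτ, one_zpow] at hconj
    rw [hconj, eq_comm, ← conj_eq_one_iff (a := h), hconj]
  · rw [hconj, zpow_add, zpow_mul, hτ, one_zpow, one_mul, zpow_one]

end CyclicOfEvenOrder

namespace IsRegularSubgroup

variable {X : Type*} {N : Subgroup (Perm X)}

lemma eq_of_apply_eq (hN : IsRegularSubgroup N) {ν μ : Perm X} (hν : ν ∈ N) (hμ : μ ∈ N)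
    {x : X} (h : ν x = μ x) : ν = μ := by
  have := hN.2 (μ⁻¹ * ν) (mul_mem (inv_mem hμ) hν) x (by simp [h])
  rwa [inv_mul_eq_one, eq_comm] at this

lemma of_free_of_card_le [Finite X] {S : Subgroup (Perm X)}
    (hfree : ∀ s ∈ S, ∀ x : X, s x = x → s = 1) (hcard : Nat.card X ≤ Nat.card S) :
    IsRegularSubgroup S := by
  refine ⟨fun x y ↦ ?_, hfree⟩
  have hinj : Function.Injective (fun s : S ↦ (s : Perm X) x) := fun s t hst ↦ by
    have := hfree _ (t⁻¹ * s).2 x (by simp [hst])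
    rwa [← Subgroup.coe_one, Subtype.coe_inj, inv_mul_eq_one, eq_comm] at this
  obtain ⟨s, hs⟩ := (hinj.bijective_of_nat_card_le hcard).2 y
  exact ⟨s, s.2, hs⟩

section Inversion

variable (hN : IsRegularSubgroup N) (x₀ : X)
include hN

lemma bijective_apply : Function.Bijective (fun ν : N ↦ (ν : Perm X) x₀) :=
  ⟨fun ν μ h ↦ Subtype.ext (hN.eq_of_apply_eq ν.2 μ.2 h), fun x ↦
    let ⟨ν, hν, hνx⟩ := hN.1 x₀ x; ⟨⟨ν, hν⟩, hνx⟩⟩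

noncomputable def orbitEquiv : N ≃ X := Equiv.ofBijective _ (hN.bijective_apply x₀)

lemma nat_card_eq_s1 [Nonempty X] : Nat.card N = Nat.card X :=
  Nat.card_congr (hN.orbitEquiv (Classical.arbitrary X))

noncomputable def inversion : Perm X := (hN.orbitEquiv x₀).permCongr (Equiv.inv N)

lemma inversion_apply {ν : Perm X} (hν : ν ∈ N) : hN.inversion x₀ (ν x₀) = ν⁻¹ x₀ := by
  have : (hN.orbitEquiv x₀).symm (ν x₀) = ⟨ν, hν⟩ := (Equiv.symm_apply_eq _).mpr rfl
  rw [inversion, Equiv.permCongr_apply, this]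
  rfl

lemma inversion_mul_self : hN.inversion x₀ * hN.inversion x₀ = 1 := by
  ext x
  obtain ⟨ν, hν, rfl⟩ := hN.1 x₀ x
  rw [Perm.mul_apply, inversion_apply _ _ hν, inversion_apply _ _ (inv_mem hν), inv_inv,
    Perm.one_apply]

variable {x₀}

lemma inversion_mul [IsMulCommutative N] {ν : Perm X} (hν : ν ∈ N) :
    hN.inversion x₀ * ν = ν⁻¹ * hN.inversion x₀ := by
  ext x
  obtain ⟨μ, hμ, rfl⟩ := hN.1 x₀ x
  rw [Perm.mul_apply, ← Perm.mul_apply ν, inversion_apply _ _ (mul_mem hν hμ), Perm.mul_apply,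
    inversion_apply _ _ hμ, ← Perm.mul_apply, mul_inv_rev,
    setLike_mul_comm (inv_mem hμ) (inv_mem hν)]

lemma exists_mul_self_eq_of_mul_inversion_apply_eq {ν : Perm X} (hν : ν ∈ N) {x : X}
    (hx : (ν * hN.inversion x₀) x = x) : ∃ μ ∈ N, ν = μ * μ := by
  obtain ⟨μ, hμ, rfl⟩ := hN.1 x₀ x
  rw [Perm.mul_apply, inversion_apply _ _ hμ, ← Perm.mul_apply] at hx
  exact ⟨μ, hμ, mul_inv_eq_iff_eq_mul.mp (hN.eq_of_apply_eq (mul_mem hν (inv_mem hμ)) hμ hx)⟩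

lemma exists_conj_inversion_eq [IsMulCommutative N] {h : Perm X}
    (hh : h ∈ normalizer (N : Set (Perm X))) :
    ∃ μ ∈ N, h * hN.inversion x₀ * h⁻¹ = μ * μ * hN.inversion x₀ := by
  obtain ⟨μ, hμ, hμx⟩ := hN.1 x₀ (h x₀)
  have hconj : ∀ ν ∈ N, h * ν * h⁻¹ ∈ N := fun ν hν ↦ (mem_normalizer_iff.mp hh ν).mp hν
  refine ⟨μ, hμ, mul_inv_eq_iff_eq_mul.mpr ?_⟩
  ext x
  obtain ⟨ν, hν, rfl⟩ := hN.1 x₀ x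
  have h_inv : h (ν⁻¹ x₀) = (h * ν⁻¹ * h⁻¹ * μ) x₀ := by simp [hμx]
  have h_apply : h (ν x₀) = (h * ν * h⁻¹ * μ) x₀ := by simp [hμx]
  simp only [Perm.mul_apply, inversion_apply _ _ hν]
  rw [h_inv, h_apply, ← Perm.mul_apply, inversion_apply _ _ (mul_mem (hconj ν hν) hμ),
    ← Perm.mul_apply (μ * μ), setLike_mul_comm (hconj _ (inv_mem hν)) hμ]
  congr 1
  group

end Inversion

section Dihedral

variable {δ : Perm X} (hN : IsRegularSubgroup (zpowers δ)) (x₀ : X) {m : ℕ}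
include hN

lemma pow_mul_inversion_mul_self (k : ℕ) :
    δ ^ k * hN.inversion x₀ * (δ ^ k * hN.inversion x₀) = 1 := by
  rw [mul_assoc, ← mul_assoc (hN.inversion x₀), hN.inversion_mul (npow_mem_zpowers δ k),
    mul_assoc, inversion_mul_self, mul_one, mul_inv_cancel]

lemma conj_pow_mul_inversion (k : ℕ) :
    δ ^ k * hN.inversion x₀ * δ ^ 2 * (δ ^ k * hN.inversion x₀)⁻¹ = (δ ^ 2)⁻¹ := by
  rw [mul_assoc (δ ^ k), hN.inversion_mul (npow_mem_zpowers δ 2)]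
  group

noncomputable def dihedralHom (hδ : orderOf δ = 2 * m) : DihedralGroup m →* Perm X :=
  DihedralGroup.lift (by rw [← pow_mul, ← hδ, pow_orderOf_eq_one])
    (hN.pow_mul_inversion_mul_self x₀ m) (hN.conj_pow_mul_inversion x₀ m)

lemma mem_range_dihedralHom (hδ : orderOf δ = 2 * m) {s : Perm X} :
    s ∈ (hN.dihedralHom x₀ hδ).range ↔
      ∃ z : ℤ, s = (δ ^ 2) ^ z ∨ s = δ ^ m * hN.inversion x₀ * (δ ^ 2) ^ z :=
  DihedralGroup.mem_range_lift ..

lemma pow_mul_inversion_mul_zpow_apply_ne (hm : Odd m) (hδ : orderOf δ = 2 * m) (z : ℤ) (x : X) :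
    (δ ^ m * hN.inversion x₀ * (δ ^ 2) ^ z) x ≠ x := by
  intro hx
  have hσz : δ ^ m * hN.inversion x₀ * (δ ^ 2) ^ z = δ ^ ((m : ℤ) - 2 * z) * hN.inversion x₀ := by
    rw [mul_assoc, hN.inversion_mul (zpow_mem (npow_mem_zpowers δ 2) z), ← mul_assoc]
    group
  rw [hσz] at hx
  obtain ⟨μ, hμ, hμμ⟩ := hN.exists_mul_self_eq_of_mul_inversion_apply_eq (zpow_mem_zpowers δ _) hx
  have := (even_of_zpow_eq_mul_self (hδ ▸ even_two_mul m) hμ hμμ).add (even_two_mul z)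
  rw [sub_add_cancel, Int.even_coe_nat] at this
  exact Nat.not_even_iff_odd.mpr hm this

lemma dihedralHom_injective (hm : Odd m) (hδ : orderOf δ = 2 * m) :
    Function.Injective (hN.dihedralHom x₀ hδ) := by
  refine DihedralGroup.lift_injective _ _ _ ?_ fun ⟨k, hk⟩ ↦
    hN.pow_mul_inversion_mul_zpow_apply_ne x₀ hm hδ (-k) x₀ ?_
  · rw [orderOf_pow_of_dvd two_ne_zero (hδ ▸ dvd_mul_right 2 m), hδ,
      Nat.mul_div_cancel_left m two_pos]
  · rw [← hk, ← zpow_add, add_neg_cancel, zpow_zero, Perm.one_apply]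

lemma isRegularSubgroup_range_dihedralHom (hm : Odd m) (hδ : orderOf δ = 2 * m) :
    IsRegularSubgroup (hN.dihedralHom x₀ hδ).range := by
  have : Nonempty X := ⟨x₀⟩
  have hcard : Nat.card X = 2 * m := by rw [← hN.nat_card_eq_s1, Nat.card_zpowers, hδ]
  have : Finite X := Nat.finite_of_card_ne_zero (by rw [hcard]; have := hm.pos; positivity)
  refine of_free_of_card_le (fun s hs x hx ↦ ?_) ?_
  · obtain ⟨z, rfl | rfl⟩ := (hN.mem_range_dihedralHom x₀ hδ).mp hs
    · exact hN.2 _ (zpow_mem (npow_mem_zpowers δ 2) z) x hx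
    · exact absurd hx (hN.pow_mul_inversion_mul_zpow_apply_ne x₀ hm hδ z x)
  · have hφ := MonoidHom.ofInjective (hN.dihedralHom_injective x₀ hm hδ)
    rw [hcard, ← Nat.card_congr hφ.toEquiv, DihedralGroup.nat_card]

lemma normalizer_le_normalizer_range_dihedralHom (hδ : orderOf δ = 2 * m) :
    normalizer (zpowers δ : Set (Perm X)) ≤
      normalizer ((hN.dihedralHom x₀ hδ).range : Set (Perm X)) := by
  rw [le_normalizer_iff]
  intro h hh s hs
  obtain ⟨μ, hμ, hι⟩ := hN.exists_conj_inversion_eq (x₀ := x₀) hh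
  obtain ⟨i, rfl⟩ := mem_zpowers_iff.mp hμ
  obtain ⟨k, hk⟩ := mem_zpowers_iff.mp ((mem_normalizer_iff.mp hh δ).mp (mem_zpowers δ))
  have hτ : h * δ ^ m * h⁻¹ = δ ^ m :=
    conj_pow_eq_of_mem_normalizer_zpowers (hδ ▸ pow_orderOf_eq_one δ) hh
  have hg (z : ℤ) : h * (δ ^ 2) ^ z * h⁻¹ = (δ ^ 2) ^ (k * z) := by
    rw [← conj_zpow, ← conj_pow, ← hk]
    group
  rw [mem_range_dihedralHom]
  obtain ⟨z, rfl | rfl⟩ := (hN.mem_range_dihedralHom x₀ hδ).mp hs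
  · exact ⟨k * z, .inl (hg z)⟩
  refine ⟨k * z - i, .inr ?_⟩
  have hιμ : δ ^ i * δ ^ i * hN.inversion x₀ = hN.inversion x₀ * (δ ^ 2) ^ (-i) := by
    rw [← inv_inv (δ ^ i * δ ^ i), ← hN.inversion_mul (inv_mem (mul_mem hμ hμ))]
    group
  calc h * (δ ^ m * hN.inversion x₀ * (δ ^ 2) ^ z) * h⁻¹
      = (h * δ ^ m * h⁻¹) * (h * hN.inversion x₀ * h⁻¹) * (h * (δ ^ 2) ^ z * h⁻¹) := by group
    _ = δ ^ m * hN.inversion x₀ * (δ ^ 2) ^ (k * z - i) := by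
      rw [hτ, hι, hg, hιμ, mul_assoc, mul_assoc, ← zpow_add, neg_add_eq_sub, ← mul_assoc]

end Dihedral

theorem exists_dihedral_of_isCyclic [Nonempty X] (hN : IsRegularSubgroup N) [IsCyclic N] {m : ℕ}
    (hm : Odd m) (hcard : Nat.card N = 2 * m) :
    ∃ M : Subgroup (Perm X), IsRegularSubgroup M ∧ Nonempty (M ≃* DihedralGroup m) ∧
      normalizer (N : Set (Perm X)) ≤ normalizer (M : Set (Perm X)) := by
  obtain ⟨δ, rfl⟩ := (Subgroup.isCyclic_iff_exists_zpowers_eq_top N).mp ‹_›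
  rw [Nat.card_zpowers] at hcard
  obtain ⟨x₀⟩ := ‹Nonempty X›
  exact ⟨_, hN.isRegularSubgroup_range_dihedralHom x₀ hm hcard,
    ⟨(MonoidHom.ofInjective (hN.dihedralHom_injective x₀ hm hcard)).symm⟩,
    hN.normalizer_le_normalizer_range_dihedralHom x₀ hcard⟩

end IsRegularSubgroup

theorem cyclic_type_implies_dihedral_type_general (p n : ℕ) (hodd : Odd p)
    (G : Type*) [Group G] (G' : Subgroup G)
    (h : ∃ N : Subgroup (Equiv.Perm (G ⧸ G')),
        IsRegularSubgroup N ∧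
        Nonempty (↥N ≃* Multiplicative (ZMod (2 * p ^ n))) ∧
        ∀ g : G, MulAction.toPermHom G (G ⧸ G') g ∈ Subgroup.normalizer (N : Set (Equiv.Perm (G ⧸ G')))) :
    ∃ M : Subgroup (Equiv.Perm (G ⧸ G')),
        IsRegularSubgroup M ∧
        Nonempty (↥M ≃* DihedralGroup (p ^ n)) ∧
        ∀ g : G, MulAction.toPermHom G (G ⧸ G') g ∈ Subgroup.normalizer (M : Set (Equiv.Perm (G ⧸ G'))) := by
  obtain ⟨N, hN, ⟨θ⟩, hnorm⟩ := h
  have : IsCyclic N := θ.isCyclic.mpr inferInstance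
  have hcard : Nat.card N = 2 * p ^ n := by
    rw [Nat.card_congr (θ.toEquiv.trans Multiplicative.toAdd), Nat.card_zmod]
  obtain ⟨M, hM, hMD, hle⟩ := hN.exists_dihedral_of_isCyclic hodd.pow hcard
  exact ⟨M, hM, hMD, fun g ↦ hle (hnorm g)⟩

/-- Theorem 3.1: if a separable extension of degree `2 p ^ n` (Galois data `(G, G')`,
`p` an odd prime) has a Hopf Galois structure of cyclic type, then it has one of
dihedral type. -/
theorem cyclic_type_implies_dihedral_type (p n : ℕ) (hp : p.Prime) (hodd : Odd p)
    (hn : 1 ≤ n) (G : Type*) [Group G] [Finite G] (G' : Subgroup G)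
    (hindex : G'.index = 2 * p ^ n)
    (h : ∃ N : Subgroup (Equiv.Perm (G ⧸ G')),
        IsRegularSubgroup N ∧
        Nonempty (↥N ≃* Multiplicative (ZMod (2 * p ^ n))) ∧
        ∀ g : G, MulAction.toPermHom G (G ⧸ G') g ∈ Subgroup.normalizer (N : Set (Equiv.Perm (G ⧸ G')))) :
    ∃ M : Subgroup (Equiv.Perm (G ⧸ G')),
        IsRegularSubgroup M ∧
        Nonempty (↥M ≃* DihedralGroup (p ^ n)) ∧
        ∀ g : G, MulAction.toPermHom G (G ⧸ G') g ∈ Subgroup.normalizer (M : Set (Equiv.Perm (G ⧸ G'))) :=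
  cyclic_type_implies_dihedral_type_general p n hodd G G' h
end

section
/- Let p be an odd prime and n ≥ 1, and let D = DihedralGroup(p^n). Every subgroup T of the holomorph Hol(D) ≤ Equiv.Perm D whose induced action on D is transitive contains an element of order p^n. -/
/-!
Every `h ∈ Hol D` has the form `x ↦ φ x * h 1` with `φ` an injective endomorphism of `D`. As
`p ^ n` is odd, the rotations of `D` are exactly its squares, so `φ` preserves rotations and
reflections, and an element of `Hol D` of odd order sends `1` to a rotation. The orbits of a
Sylow `p`-subgroup `P` of the transitive group `T` have size divisible by `p ^ n`, the `p`-part of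
`|D| = 2 p ^ n`; hence the `P`-orbit of `1` is the set of all `p ^ n` rotations, and some `t ∈ P`
sends `1` to `r 1`. Such a `t` acts by `r i ↦ r (u i + 1)`, `sr i ↦ sr (u i + c)`, so
`t ^ N = 1` iff `∑_{i<N} u ^ i = 0` in `ZMod (p ^ n)`. Since `t` has `p`-power order,
`u ≡ 1 [MOD p]`, and lifting the exponent gives `v_p (∑_{i<N} u ^ i) = v_p N`: the order of `t`
is exactly `p ^ n`.
-/

open Finset MulAction

namespace Hol

variable {X : Type*} [Group X] {h : Equiv.Perm X}

theorem apply_mul (hh : h ∈ Hol X) (x y : X) : h (x * y) = h x * (h 1)⁻¹ * h y := by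
  obtain ⟨z, hz⟩ : h * MulAction.toPermHom X X x * h⁻¹ ∈ (MulAction.toPermHom X X).range := by
    rw [← Subgroup.mem_normalizer_iff.mp hh]
    exact ⟨x, rfl⟩
  have hz_apply (w : X) : z * w = h (x * h⁻¹ w) := by
    simpa using congrArg (· w) hz
  have hz_eq : z = h x * (h 1)⁻¹ := by
    simpa [eq_mul_inv_iff_mul_eq] using hz_apply (h 1)
  simpa [hz_eq] using (hz_apply (h y)).symm

def homPart (hh : h ∈ Hol X) : X →* X where
  toFun x := h x * (h 1)⁻¹
  map_one' := mul_inv_cancel _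
  map_mul' x y := by rw [apply_mul hh]; group

theorem apply_eq_homPart_mul (hh : h ∈ Hol X) (x : X) : h x = homPart hh x * h 1 :=
  (inv_mul_cancel_right _ _).symm

theorem homPart_injective (hh : h ∈ Hol X) : Function.Injective (homPart hh) :=
  fun _ _ hxy => h.injective (mul_right_cancel hxy)

end Hol

theorem ZMod.isUnit_two_of_odd {n : ℕ} (hn : Odd n) : IsUnit (2 : ZMod n) := by
  exact_mod_cast (ZMod.isUnit_iff_coprime 2 n).2 (Nat.coprime_two_left.2 hn)

theorem pow_eq_one_of_geom_sum_eq_zero {R : Type*} [CommRing R] {x : R} {N : ℕ}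
    (h : ∑ i ∈ range N, x ^ i = 0) : x ^ N = 1 := by
  rw [← sub_eq_zero, ← geom_sum_mul, h, zero_mul]

theorem padicValNat_geom_sum {p : ℕ} [Fact p.Prime] (hp : Odd p) {U : ℕ} (hU : U ≡ 1 [MOD p])
    {N : ℕ} (hN : N ≠ 0) : padicValNat p (∑ i ∈ range N, U ^ i) = padicValNat p N := by
  have hprime : p.Prime := Fact.out
  have hU1 : 1 ≤ U := Nat.one_le_iff_ne_zero.2 <| by
    rintro rfl
    exact hprime.not_dvd_one (Nat.modEq_zero_iff_dvd.1 hU.symm)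
  rcases hU1.eq_or_lt with rfl | hU1
  · simp
  have hdvd : p ∣ U - 1 := (Nat.modEq_iff_dvd' hU1.le).1 hU.symm
  have hndvd : ¬ p ∣ U := fun h =>
    hprime.not_dvd_one (by simpa [Nat.sub_sub_self hU1.le] using Nat.dvd_sub h hdvd)
  have hS : ∑ i ∈ range N, U ^ i ≠ 0 := (geom_sum_pos (Nat.zero_le U) hN).ne'
  have key := padicValNat.pow_sub_pow hp hU1 hdvd hndvd hN
  rw [one_pow, ← geom_sum_mul_of_one_le hU1.le,
    padicValNat.mul hS (Nat.sub_ne_zero_of_lt hU1)] at key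
  omega

theorem pow_dvd_geom_sum_iff {p : ℕ} [Fact p.Prime] (hp : Odd p) {U : ℕ} (hU : U ≡ 1 [MOD p])
    (k N : ℕ) : p ^ k ∣ ∑ i ∈ range N, U ^ i ↔ p ^ k ∣ N := by
  rcases eq_or_ne N 0 with rfl | hN
  · simp
  have hS : ∑ i ∈ range N, U ^ i ≠ 0 := (geom_sum_pos (Nat.zero_le U) hN).ne'
  rw [padicValNat_dvd_iff_le hS, padicValNat_dvd_iff_le hN, padicValNat_geom_sum hp hU hN]

theorem Sylow.pow_dvd_ncard_orbit {G X : Type*} [Group G] [MulAction G X] [IsPretransitive G X]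
    {p a : ℕ} [Fact p.Prime] (P : Sylow p G) [P.FiniteIndex] (x : X)
    (ha : p ^ a ∣ Nat.card X) : p ^ a ∣ (orbit P x).ncard := by
  have hcop : (p ^ a).Coprime P.index :=
    ((Nat.Prime.coprime_iff_not_dvd Fact.out).2 P.not_dvd_index).pow_left a
  have hstab : stabilizer P x = (stabilizer G x).subgroupOf P := by ext; rfl
  rw [← index_stabilizer, hstab, ← Subgroup.relIndex]
  rw [← index_stabilizer_of_transitive G x] at ha
  refine hcop.dvd_of_dvd_mul_right (ha.trans ?_)
  calc (stabilizer G x).index ∣ (stabilizer G x ⊓ P).index :=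
        Subgroup.index_dvd_of_le inf_le_left
    _ = (stabilizer G x).relIndex P * P.index := by
        rw [← Subgroup.relIndex_mul_index inf_le_right, Subgroup.inf_relIndex_right]

namespace DihedralGroup

section

variable {n : ℕ}

theorem mul_mem_range_r_iff {a b : DihedralGroup n} :
    a * b ∈ Set.range r ↔ (a ∈ Set.range r ↔ b ∈ Set.range r) := by
  cases a <;> cases b <;> simp [r_mul_r, r_mul_sr, sr_mul_r, sr_mul_sr]

theorem mem_range_r_iff_isSquare (hn : Odd n) {x : DihedralGroup n} :
    x ∈ Set.range r ↔ IsSquare x := by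
  constructor
  · rintro ⟨i, rfl⟩
    obtain ⟨j, rfl⟩ := Even.of_isUnit_two (ZMod.isUnit_two_of_odd hn) i
    exact ⟨r j, r_mul_r j j⟩
  · rintro ⟨y, rfl⟩
    cases y with
    | r j => exact ⟨j + j, r_mul_r j j⟩
    | sr j => exact ⟨0, by rw [sr_mul_sr, sub_self]⟩

theorem map_mem_range_r_iff (hn : Odd n) {φ : DihedralGroup n →* DihedralGroup n}
    (hφ : Function.Injective φ) {x : DihedralGroup n} :
    φ x ∈ Set.range r ↔ x ∈ Set.range r := by
  constructor
  · rintro ⟨j, hj⟩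
    cases x with
    | r i => exact ⟨i, rfl⟩
    | sr i =>
      have hjj : r (2 * j) = 1 := by
        rw [two_mul, ← r_mul_r, hj, ← map_mul, sr_mul_self, map_one]
      have hj0 : j = 0 := (ZMod.isUnit_two_of_odd hn).mul_right_eq_zero.1 (r.inj hjj)
      have : sr i = 1 := hφ (by rw [← hj, hj0, r_zero, map_one])
      rw [one_def] at this
      cases this
  · intro hx
    obtain ⟨y, rfl⟩ := (mem_range_r_iff_isSquare hn).1 hx
    exact (mem_range_r_iff_isSquare hn).2 ⟨φ y, map_mul φ y y⟩

variable {h : Equiv.Perm (DihedralGroup n)}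

theorem hol_apply_mem_range_r_iff (hn : Odd n) (hh : h ∈ Hol (DihedralGroup n))
    (x : DihedralGroup n) : h x ∈ Set.range r ↔ (x ∈ Set.range r ↔ h 1 ∈ Set.range r) := by
  rw [Hol.apply_eq_homPart_mul hh, mul_mem_range_r_iff,
    map_mem_range_r_iff hn (Hol.homPart_injective hh)]

theorem hol_apply_one_mem_range_r_of_odd_orderOf (hn : Odd n) (hh : h ∈ Hol (DihedralGroup n))
    (hodd : Odd (orderOf h)) : h 1 ∈ Set.range r := by
  obtain ⟨k, hk⟩ := hodd
  have hsq : h ^ (k + 1) * h ^ (k + 1) = h := by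
    rw [← pow_add, show k + 1 + (k + 1) = orderOf h + 1 by omega, pow_succ, pow_orderOf_eq_one,
      one_mul]
  have hg := Subgroup.pow_mem _ hh (k + 1)
  -- `g (g 1)` is a rotation for every `g ∈ Hol D`, whichever coset `g 1` lies in.
  rw [← hsq, Equiv.Perm.mul_apply, hol_apply_mem_range_r_iff hn hg]

theorem exists_affine_of_hol_apply_one_eq_r_one (hn : Odd n) (hh : h ∈ Hol (DihedralGroup n))
    (h1 : h 1 = r 1) :
    ∃ u c : ZMod n, (∀ i, h (r i) = r (u * i + 1)) ∧ ∀ i, h (sr i) = sr (u * i + c) := by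
  have : NeZero n := ⟨hn.pos.ne'⟩
  set φ := Hol.homPart hh
  obtain ⟨u, hu⟩ : φ (r 1) ∈ Set.range r :=
    (map_mem_range_r_iff hn (Hol.homPart_injective hh)).2 ⟨1, rfl⟩
  obtain ⟨c, hc⟩ : ∃ c, φ (sr 0) = sr c := by
    have hs : φ (sr 0) ∉ Set.range r := by
      rw [map_mem_range_r_iff hn (Hol.homPart_injective hh)]
      simp
    cases hφ : φ (sr 0) with
    | r j => exact absurd ⟨j, hφ.symm⟩ hs
    | sr j => exact ⟨j, rfl⟩
  have hφr (i : ZMod n) : φ (r i) = r (u * i) := by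
    rw [← ZMod.natCast_zmod_val i, ← r_one_pow, map_pow, ← hu, r_pow]
  refine ⟨u, c + 1, fun i => ?_, fun i => ?_⟩
  · rw [Hol.apply_eq_homPart_mul hh, h1, hφr, r_mul_r]
  · rw [Hol.apply_eq_homPart_mul hh, h1, ← zero_add i, ← sr_mul_r, map_mul, hc, hφr, sr_mul_r,
      sr_mul_r]
    ring_nf

variable {t : Equiv.Perm (DihedralGroup n)} {u c : ZMod n}

theorem affine_pow_apply (hr : ∀ i, t (r i) = r (u * i + 1))
    (hs : ∀ i, t (sr i) = sr (u * i + c)) (N : ℕ) :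
    (∀ i, (t ^ N) (r i) = r (u ^ N * i + ∑ j ∈ range N, u ^ j)) ∧
      ∀ i, (t ^ N) (sr i) = sr (u ^ N * i + c * ∑ j ∈ range N, u ^ j) := by
  induction N with
  | zero => simp
  | succ N ih =>
    refine ⟨fun i => ?_, fun i => ?_⟩
    · rw [pow_succ, Equiv.Perm.mul_apply, hr, ih.1, geom_sum_succ']
      ring_nf
    · rw [pow_succ, Equiv.Perm.mul_apply, hs, ih.2, geom_sum_succ']
      ring_nf

theorem affine_pow_eq_one_iff (hr : ∀ i, t (r i) = r (u * i + 1))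
    (hs : ∀ i, t (sr i) = sr (u * i + c)) (N : ℕ) :
    t ^ N = 1 ↔ ∑ j ∈ range N, u ^ j = 0 := by
  have hpow := affine_pow_apply hr hs N
  constructor
  · intro h
    have h0 := hpow.1 0
    rw [h, Equiv.Perm.one_apply, mul_zero, zero_add] at h0
    exact (r.inj h0).symm
  · intro hS
    have huN := pow_eq_one_of_geom_sum_eq_zero hS
    ext x
    cases x <;> simp [hpow.1, hpow.2, huN, hS]

end

theorem orderOf_hol_eq_of_apply_one_eq_r_one {p n : ℕ} [Fact p.Prime] (hp : Odd p) (hn : 1 ≤ n)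
    {t : Equiv.Perm (DihedralGroup (p ^ n))} (ht : t ∈ Hol (DihedralGroup (p ^ n)))
    (h1 : t 1 = r 1) {k : ℕ} (hk : t ^ p ^ k = 1) : orderOf t = p ^ n := by
  have : NeZero (p ^ n) := ⟨pow_ne_zero n (Fact.out : p.Prime).ne_zero⟩
  obtain ⟨u, c, hr, hs⟩ := exists_affine_of_hol_apply_one_eq_r_one hp.pow ht h1
  have key := affine_pow_eq_one_iff hr hs
  obtain ⟨U, rfl⟩ : ∃ U : ℕ, (U : ZMod (p ^ n)) = u := ⟨u.val, ZMod.natCast_zmod_val u⟩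
  have hU : U ≡ 1 [MOD p] := by
    have hpow : U ^ p ^ k ≡ 1 [MOD p ^ n] := by
      rw [← ZMod.natCast_eq_natCast_iff]
      push_cast
      exact pow_eq_one_of_geom_sum_eq_zero ((key _).1 hk)
    have := (ZMod.natCast_eq_natCast_iff _ _ _).2 (hpow.of_dvd (dvd_pow_self p (by omega)))
    push_cast at this
    rwa [ZMod.pow_card_pow, ← Nat.cast_one, ZMod.natCast_eq_natCast_iff] at this
  refine Nat.dvd_right_iff_eq.1 fun N => ?_
  rw [orderOf_dvd_iff_pow_eq_one, key, ← pow_dvd_geom_sum_iff hp hU, ← ZMod.natCast_eq_zero_iff]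
  push_cast
  rfl

theorem exists_prime_pow_order_apply_one_eq_r_one {p n : ℕ} [Fact p.Prime] (hp : Odd p)
    (T : Subgroup (Equiv.Perm (DihedralGroup (p ^ n)))) (hT : T ≤ Hol (DihedralGroup (p ^ n)))
    [IsPretransitive T (DihedralGroup (p ^ n))] :
    ∃ t ∈ T, (∃ k, t ^ p ^ k = 1) ∧ t 1 = r 1 := by
  have : NeZero (p ^ n) := ⟨pow_ne_zero n (Fact.out : p.Prime).ne_zero⟩
  obtain ⟨P⟩ : Nonempty (Sylow p T) := inferInstance
  have hpow (g : P) : ∃ k, ((g : T) : Equiv.Perm (DihedralGroup (p ^ n))) ^ p ^ k = 1 := by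
    obtain ⟨k, hk⟩ := P.isPGroup' g
    exact ⟨k, by
      simpa using congrArg (fun g : P => ((g : T) : Equiv.Perm (DihedralGroup (p ^ n)))) hk⟩
  have hsub : orbit P (1 : DihedralGroup (p ^ n)) ⊆ Set.range r := by
    rintro _ ⟨g, rfl⟩
    obtain ⟨k, hk⟩ := hpow g
    exact hol_apply_one_mem_range_r_of_odd_orderOf hp.pow (hT (g : T).2)
      (hp.pow.of_dvd_nat (orderOf_dvd_of_pow_eq_one hk))
  have hcard : (Set.range (r : ZMod (p ^ n) → DihedralGroup (p ^ n))).ncard = p ^ n := by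
    rw [← Nat.card_coe_set_eq, Nat.card_range_of_injective (fun _ _ => r.inj), Nat.card_zmod]
  have hle : p ^ n ≤ (orbit P (1 : DihedralGroup (p ^ n))).ncard :=
    Nat.le_of_dvd ((Set.ncard_pos (Set.toFinite _)).2 ⟨1, mem_orbit_self 1⟩)
      (P.pow_dvd_ncard_orbit 1 (by rw [nat_card]; exact dvd_mul_left _ _))
  have horbit := Set.eq_of_subset_of_ncard_le hsub (hcard.trans_le hle) (Set.toFinite _)
  obtain ⟨g, hg⟩ : r 1 ∈ orbit P (1 : DihedralGroup (p ^ n)) := horbit ▸ ⟨1, rfl⟩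
  exact ⟨g, (g : T).2, hpow g, hg⟩

end DihedralGroup

/-- Every transitive subgroup of the holomorph of `DihedralGroup (p ^ n)` (`p` an odd
prime, `n ≥ 1`) contains an element of order `p ^ n`. -/
theorem transitive_subgroup_hol_dihedral_has_elem_order_p_pow (p n : ℕ) (hp : p.Prime)
    (hodd : Odd p) (hn : 1 ≤ n)
    (T : Subgroup (Equiv.Perm (DihedralGroup (p ^ n))))
    (hT : T ≤ Hol (DihedralGroup (p ^ n)))
    (htrans : ∀ x y : DihedralGroup (p ^ n), ∃ t ∈ T, t x = y) :
    ∃ t ∈ T, orderOf t = p ^ n := by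
  have : Fact p.Prime := ⟨hp⟩
  have : IsPretransitive T (DihedralGroup (p ^ n)) :=
    ⟨fun x y => let ⟨t, ht, hxy⟩ := htrans x y; ⟨⟨t, ht⟩, hxy⟩⟩
  obtain ⟨t, htT, ⟨k, hk⟩, ht1⟩ :=
    DihedralGroup.exists_prime_pow_order_apply_one_eq_r_one hodd T hT
  exact ⟨t, htT, DihedralGroup.orderOf_hol_eq_of_apply_one_eq_r_one hodd hn (hT htT) ht1 hk⟩
end

section
/- Let p be an odd prime and n ≥ 1, and let P be a Sylow p-subgroup of the holomorph Hol(DihedralGroup(p^n)). Then P has order p^(3n-1), and the set of elements of P of order at most p^(n-1) is a subgroup of P of order p^(3n-3). -/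
/-!
Every element of `Hol X` is `y ↦ σ y * b` for unique `σ ∈ Aut X` and `b ∈ X`, so
`|Hol X| = |Aut X| * |X|`. For `m ≠ 2` the automorphisms of `D_m` are `r i ↦ r (k i)`,
`sr i ↦ sr (k i + t)` with `k` a unit, so `|Hol D_m| = φ(m) * m * 2m`, which for `m = p ^ n` is
`p ^ (3n - 1) * 2(p - 1)`. The permutations `r i ↦ r (k i + a)`, `sr i ↦ sr (k i + b)` with
`k ≡ 1 mod p` lie in `Hol D_m` and form a subgroup of order `p ^ (3n - 1)`: a Sylow subgroup,
isomorphic to every other one. They compose like pairs of affine maps with a common linear part,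
so the `p ^ (n - 1)`-th power of `(k, a, b)` is `(1, S a, S b)` with
`S = ∑_{i < p ^ (n - 1)} k ^ i`, and `S = p ^ (n - 1)` in `ZMod (p ^ n)` because `p` is odd.
Hence the elements of order at most `p ^ (n - 1)` are those with `p ∣ a` and `p ∣ b`, a subgroup
of order `p ^ (3n - 3)`.
-/

@[to_additive AddMonoidHom.card_ker_mul_card_of_surjective]
theorem MonoidHom.card_ker_mul_card_of_surjective {G G' : Type*} [Group G] [Group G']
    (f : G →* G') (hf : Function.Surjective f) : Nat.card f.ker * Nat.card G' = Nat.card G := by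
  rw [← f.ker.card_mul_index, Subgroup.index_ker, f.range_eq_top_of_surjective hf,
    Subgroup.card_top]

theorem IsPGroup.orderOf_le_pow_iff {p : ℕ} [Fact p.Prime] {G : Type*} [Group G]
    (hG : IsPGroup p G) (c : ℕ) (x : G) : orderOf x ≤ p ^ c ↔ x ^ p ^ c = 1 := by
  obtain ⟨i, hi⟩ := IsPGroup.iff_orderOf.mp hG x
  have hp := (Fact.out : p.Prime).one_lt
  rw [← orderOf_dvd_iff_pow_eq_one, hi, Nat.pow_dvd_pow_iff_le_right hp,
    Nat.pow_le_pow_iff_right hp]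

theorem MulEquiv.exists_subgroup_coe_eq_setOf_orderOf_le {G G' : Type*} [Group G] [Group G']
    (e : G ≃* G') {c q : ℕ}
    (h : ∃ Q : Subgroup G, (Q : Set G) = {x | orderOf x ≤ c} ∧ Nat.card Q = q) :
    ∃ Q : Subgroup G', (Q : Set G') = {x | orderOf x ≤ c} ∧ Nat.card Q = q := by
  obtain ⟨Q, hQ, rfl⟩ := h
  refine ⟨Q.map e.toMonoidHom, ?_,
    (Nat.card_congr (Q.equivMapOfInjective _ e.injective).toEquiv).symm⟩
  ext y
  simp only [MulEquiv.coe_toMonoidHom, Subgroup.coe_map, hQ, Set.mem_image, Set.mem_ofPred_eq]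
  refine ⟨fun ⟨x, hx, hxy⟩ ↦ hxy ▸ (e.orderOf_eq x).symm ▸ hx,
    fun hy ↦ ⟨e.symm y, ?_, e.apply_symm_apply y⟩⟩
  rwa [e.symm.orderOf_eq]

section GeomSum

open Finset

theorem geom_sum_range_mul {R : Type*} [CommSemiring R] (x : R) (a b : ℕ) :
    ∑ i ∈ range (a * b), x ^ i =
      (∑ i ∈ range a, x ^ i) * ∑ j ∈ range b, (x ^ a) ^ j := by
  induction b with
  | zero => simp
  | succ b ih =>
    rw [Nat.mul_succ, sum_range_add, ih, sum_range_succ, mul_add,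
      sum_mul (range a) (x ^ ·) ((x ^ a) ^ b)]
    congr 1
    exact sum_congr rfl fun i _ ↦ by ring

theorem pow_succ_dvd_geom_sum_sub {R : Type*} [CommRing R] {p : ℕ} (hp : Odd p) (j : ℕ)
    {k : R} (hk : (p : R) ∣ k - 1) :
    (p : R) ^ (j + 1) ∣ ∑ i ∈ range (p ^ j), k ^ i - (p : R) ^ j := by
  induction j generalizing k with
  | zero => simp
  | succ j ih =>
    obtain ⟨c, hc⟩ := hk
    rw [pow_succ' p j, geom_sum_range_mul]
    set A := ∑ i ∈ range p, k ^ i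
    set B := ∑ i ∈ range (p ^ j), (k ^ p) ^ i
    have hA : (p : R) ^ 2 ∣ A - p := by simpa [A, ← hc] using odd_sq_dvd_geom_sum₂_sub 1 c hp
    have hpA : (p : R) ∣ A := dvd_sub_self_right.mp ((dvd_pow_self _ two_ne_zero).trans hA)
    have hB : (p : R) ^ (j + 1) ∣ B - p ^ j :=
      ih (hc ▸ dvd_mul_right _ _ |>.trans (by simpa using sub_dvd_pow_sub_pow k 1 p))
    rw [show A * B - (p : R) ^ (j + 1) = A * (B - p ^ j) + p ^ j * (A - p) by ring]
    exact dvd_add (pow_succ' (p : R) (j + 1) ▸ mul_dvd_mul hpA hB)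
      (pow_add (p : R) j 2 ▸ mul_dvd_mul_left _ hA)

theorem ZMod.geom_sum_eq_prime_pow {p n : ℕ} (hp : Odd p) (hn : 1 ≤ n) {k : ZMod (p ^ n)}
    (hk : (p : ZMod (p ^ n)) ∣ k - 1) :
    ∑ i ∈ range (p ^ (n - 1)), k ^ i = (p : ZMod (p ^ n)) ^ (n - 1) := by
  have := pow_succ_dvd_geom_sum_sub hp (n - 1) hk
  rwa [Nat.sub_add_cancel hn, ← Nat.cast_pow, ZMod.natCast_self, zero_dvd_iff,
    sub_eq_zero] at this

end GeomSum

theorem Nat.Prime.not_dvd_two_mul_sub_one {p : ℕ} (hp : p.Prime) (hodd : Odd p) :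
    ¬ p ∣ 2 * (p - 1) := by
  intro hd
  rcases hp.dvd_mul.mp hd with h2 | h1
  · rw [(Nat.prime_dvd_prime_iff_eq hp Nat.prime_two).mp h2] at hodd
    exact absurd hodd (by decide)
  · have := Nat.le_of_dvd (Nat.sub_pos_of_lt hp.one_lt) h1
    have := hp.pos
    omega

theorem ZMod.castHom_eq_zero_iff_dvd_val {m d : ℕ} [NeZero m] (h : d ∣ m) (a : ZMod m) :
    ZMod.castHom h (ZMod d) a = 0 ↔ d ∣ a.val := by
  rw [ZMod.castHom_apply, ZMod.cast_eq_val, ZMod.natCast_eq_zero_iff]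

theorem ZMod.pow_mul_eq_zero_iff_dvd_val {p n : ℕ} (hp : 0 < p) (hn : 1 ≤ n)
    (a : ZMod (p ^ n)) :
    (p : ZMod (p ^ n)) ^ (n - 1) * a = 0 ↔ p ∣ a.val := by
  have : NeZero (p ^ n) := ⟨(pow_pos hp n).ne'⟩
  rw [← ZMod.natCast_zmod_val a, ← Nat.cast_pow, ← Nat.cast_mul, ZMod.natCast_eq_zero_iff,
    ZMod.val_natCast_of_lt (ZMod.val_lt a)]
  generalize a.val = v
  rw [← Nat.sub_add_cancel hn, pow_succ, Nat.add_sub_cancel,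
    Nat.mul_dvd_mul_iff_left (pow_pos hp _)]

theorem ZMod.card_ker_castHom_mul {m d : ℕ} (h : d ∣ m) :
    Nat.card (RingHom.ker (ZMod.castHom h (ZMod d))) * d = m := by
  simpa using (ZMod.castHom h (ZMod d)).toAddMonoidHom.card_ker_mul_card_of_surjective
    (ZMod.castHom_surjective h)

theorem ZMod.card_ker_unitsMap_mul {m d : ℕ} [NeZero m] (h : d ∣ m) :
    Nat.card (ZMod.unitsMap h).ker * d.totient = m.totient := by
  have : NeZero d := ⟨fun hd ↦ NeZero.ne m (Nat.eq_zero_of_zero_dvd (hd ▸ h))⟩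
  simpa [Nat.card_eq_fintype_card, ZMod.card_units_eq_totient] using
    (ZMod.unitsMap h).card_ker_mul_card_of_surjective (ZMod.unitsMap_surjective h)

theorem ZMod.card_ker_unitsMap_prime_pow {p n : ℕ} (h : p ∣ p ^ n) (hp : p.Prime)
    (hn : 1 ≤ n) :
    Nat.card (ZMod.unitsMap h).ker = p ^ (n - 1) := by
  have : NeZero (p ^ n) := ⟨pow_ne_zero n hp.ne_zero⟩
  have := ZMod.card_ker_unitsMap_mul h
  rw [Nat.totient_prime hp, Nat.totient_prime_pow hp hn] at this
  exact Nat.eq_of_mul_eq_mul_right (Nat.sub_pos_of_lt hp.one_lt) this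

theorem ZMod.card_ker_castHom_prime_pow {p n : ℕ} (h : p ∣ p ^ n) (hp : p.Prime)
    (hn : 1 ≤ n) :
    Nat.card (RingHom.ker (ZMod.castHom h (ZMod p))) = p ^ (n - 1) := by
  have hpn : p ^ n = p ^ (n - 1) * p := by rw [← pow_succ, Nat.sub_add_cancel hn]
  exact Nat.eq_of_mul_eq_mul_right hp.pos ((ZMod.card_ker_castHom_mul h).trans hpn)

theorem ZMod.dvd_sub_one_of_mem_ker_unitsMap {m d : ℕ} [NeZero m] (h : d ∣ m) {k : (ZMod m)ˣ}
    (hk : k ∈ (ZMod.unitsMap h).ker) : (d : ZMod m) ∣ k - 1 := by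
  have : ZMod.castHom h (ZMod d) ((k : ZMod m) - 1) = 0 := by
    rw [map_sub, map_one, sub_eq_zero]
    exact Units.ext_iff.mp hk
  rw [ZMod.castHom_eq_zero_iff_dvd_val] at this
  rw [← ZMod.natCast_zmod_val ((k : ZMod m) - 1)]
  exact Nat.cast_dvd_cast this

namespace Hol

variable {X : Type*} [Group X]

def toPerm (σ : MulAut X) (b : X) : Equiv.Perm X :=
  σ.toEquiv.trans (Equiv.mulRight b)

@[simp]
theorem toPerm_apply (σ : MulAut X) (b y : X) : toPerm σ b y = σ y * b := rfl

theorem toPerm_mul_toPermHom (σ : MulAut X) (b x : X) :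
    toPerm σ b * MulAction.toPermHom X X x = MulAction.toPermHom X X (σ x) * toPerm σ b := by
  ext y
  simp [mul_assoc]

theorem toPerm_mem (σ : MulAut X) (b : X) : toPerm σ b ∈ Hol X := by
  refine Subgroup.mem_normalizer_iff.mpr fun f ↦ ⟨?_, ?_⟩
  · rintro ⟨x, rfl⟩
    exact ⟨σ x, by rw [toPerm_mul_toPermHom, mul_inv_cancel_right]⟩
  · rintro ⟨y, hy⟩
    refine ⟨σ.symm y, ?_⟩
    have := toPerm_mul_toPermHom σ b (σ.symm y)
    rw [MulEquiv.apply_symm_apply, hy, inv_mul_cancel_right] at this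
    exact mul_left_cancel this

theorem exists_toPerm_eq {η : Equiv.Perm X} (hη : η ∈ Hol X) : ∃ σ b, toPerm σ b = η := by
  have hmul : ∀ x y, η (x * y) = η x * (η 1)⁻¹ * η y := by
    intro x y
    obtain ⟨x', hx'⟩ := (Subgroup.mem_normalizer_iff.mp hη _).mp ⟨x, rfl⟩
    have h : ∀ z, η (x * z) = x' * η z := fun z ↦ by
      simpa using (congrArg (· (η z)) hx').symm
    have h1 := h 1
    rw [mul_one] at h1
    rw [h, h1, mul_inv_cancel_right]
  refine ⟨MulEquiv.mk' (η.trans (Equiv.mulRight (η 1)⁻¹)) fun x y ↦ ?_, η 1, ?_⟩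
  · simp [hmul, mul_assoc]
  · ext y
    exact inv_mul_cancel_right (η y) (η 1)

theorem toPerm_injective : Function.Injective fun q : MulAut X × X ↦ toPerm q.1 q.2 := by
  rintro ⟨σ, b⟩ ⟨σ', b'⟩ h
  have hb : b = b' := by simpa using congrArg (· 1) h
  subst hb
  simp only [Prod.mk.injEq, and_true]
  ext x
  simpa using congrArg (· x) h

theorem card_eq : Nat.card (Hol X) = Nat.card (MulAut X) * Nat.card X := by
  rw [← Nat.card_prod]
  refine (Nat.card_congr (Equiv.ofBijective (fun q ↦ ⟨toPerm q.1 q.2, toPerm_mem q.1 q.2⟩)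
    ⟨fun q q' h ↦ toPerm_injective (congrArg Subtype.val h), ?_⟩)).symm
  rintro ⟨η, hη⟩
  obtain ⟨σ, b, rfl⟩ := exists_toPerm_eq hη
  exact ⟨(σ, b), rfl⟩

end Hol

namespace DihedralGroup

variable {m : ℕ}

def affineAut (k : (ZMod m)ˣ) (t : ZMod m) : MulAut (DihedralGroup m) where
  toFun
    | r i => r (k * i)
    | sr i => sr (k * i + t)
  invFun
    | r i => r (↑k⁻¹ * i)
    | sr i => sr (↑k⁻¹ * (i - t))
  left_inv := by rintro (i | i) <;> simp [← mul_assoc]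
  right_inv := by rintro (i | i) <;> simp [← mul_assoc]
  map_mul' := by
    rintro (i | i) (j | j) <;> simp only [r_mul_r, r_mul_sr, sr_mul_r, sr_mul_sr] <;> ring_nf

@[simp]
theorem affineAut_r (k : (ZMod m)ˣ) (t i : ZMod m) :
    affineAut k t (r i) = r ((k : ZMod m) * i) := rfl

@[simp]
theorem affineAut_sr (k : (ZMod m)ˣ) (t i : ZMod m) :
    affineAut k t (sr i) = sr ((k : ZMod m) * i + t) := rfl

theorem affineAut_injective :
    Function.Injective fun q : (ZMod m)ˣ × ZMod m ↦ affineAut q.1 q.2 := by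
  rintro ⟨k, t⟩ ⟨k', t'⟩ h
  have hk := congrArg (· (r 1)) h
  have ht := congrArg (· (sr 0)) h
  simp only [affineAut_r, affineAut_sr, mul_one, mul_zero, zero_add, r.injEq, sr.injEq] at hk ht
  exact Prod.ext (Units.ext hk) ht

theorem exists_mulAut_r_one_eq_r (hm : m ≠ 2) (σ : MulAut (DihedralGroup m)) :
    ∃ u, σ (r 1) = r u := by
  rcases h : σ (r 1) with u | u
  · exact ⟨u, rfl⟩
  · have := σ.orderOf_eq (r 1)
    rw [h, orderOf_sr, orderOf_r_one] at this
    exact absurd this.symm hm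

theorem mulAut_r_eq [NeZero m] {σ : MulAut (DihedralGroup m)} {u : ZMod m} (hu : σ (r 1) = r u)
    (i : ZMod m) : σ (r i) = r (u * i) := by
  rw [← ZMod.natCast_zmod_val i, ← r_one_pow, map_pow, hu, r_pow]

theorem exists_affineAut_eq [NeZero m] (hm : m ≠ 2) (σ : MulAut (DihedralGroup m)) :
    ∃ k t, affineAut k t = σ := by
  -- `σ` and `σ⁻¹` both send `r 1` to rotations: `σ` permutes the rotations and `u` is a unit.
  obtain ⟨u, hu⟩ := exists_mulAut_r_one_eq_r hm σ
  obtain ⟨v, hv⟩ := exists_mulAut_r_one_eq_r hm σ⁻¹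
  have huv : u * v = 1 := by
    have := mulAut_r_eq hu v
    rw [← hv, MulAut.inv_apply, MulEquiv.apply_symm_apply, r.injEq] at this
    exact this.symm
  obtain ⟨t, ht⟩ : ∃ t, σ (sr 0) = sr t := by
    rcases h : σ (sr 0) with j | j
    · have := mulAut_r_eq hu (v * j)
      rw [← mul_assoc, huv, one_mul, ← h] at this
      exact absurd (σ.injective this) (by simp)
    · exact ⟨j, rfl⟩
  refine ⟨Units.mkOfMulEqOne u v huv, t, ?_⟩
  ext (i | i)
  · simp [mulAut_r_eq hu]
  · rw [← zero_add i, ← sr_mul_r, map_mul, map_mul, ht, mulAut_r_eq hu]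
    simp [add_comm]

theorem card_mulAut [NeZero m] (hm : m ≠ 2) :
    Nat.card (MulAut (DihedralGroup m)) = m.totient * m := by
  rw [← Nat.card_congr (Equiv.ofBijective _ ⟨affineAut_injective, fun σ ↦ ?_⟩),
    Nat.card_prod, Nat.card_eq_fintype_card, ZMod.card_units_eq_totient, Nat.card_zmod]
  obtain ⟨k, t, rfl⟩ := exists_affineAut_eq hm σ
  exact ⟨(k, t), rfl⟩

theorem card_hol [NeZero m] (hm : m ≠ 2) :
    Nat.card (Hol (DihedralGroup m)) = m.totient * m * (2 * m) := by
  rw [Hol.card_eq, card_mulAut hm, nat_card]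

def affinePerm (k : (ZMod m)ˣ) (a b : ZMod m) : Equiv.Perm (DihedralGroup m) :=
  Hol.toPerm (affineAut k (b - a)) (r a)

section affinePerm

variable (k k' : (ZMod m)ˣ) (a a' b b' : ZMod m)

@[simp]
theorem affinePerm_r (i : ZMod m) : affinePerm k a b (r i) = r ((k : ZMod m) * i + a) := by
  simp [affinePerm]

@[simp]
theorem affinePerm_sr (i : ZMod m) : affinePerm k a b (sr i) = sr ((k : ZMod m) * i + b) := by
  simp [affinePerm, add_assoc]

theorem affinePerm_mem_hol : affinePerm k a b ∈ Hol (DihedralGroup m) := Hol.toPerm_mem _ _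

theorem affinePerm_mul : affinePerm k a b * affinePerm k' a' b' =
    affinePerm (k * k') ((k : ZMod m) * a' + a) ((k : ZMod m) * b' + b) := by
  ext (i | i) <;> simp only [Equiv.Perm.mul_apply, affinePerm_r, affinePerm_sr, Units.val_mul] <;>
    ring_nf

theorem affinePerm_one : affinePerm (1 : (ZMod m)ˣ) 0 0 = 1 := by
  ext (i | i) <;> simp

theorem affinePerm_inv :
    (affinePerm k a b)⁻¹ = affinePerm k⁻¹ (-(↑k⁻¹ * a)) (-(↑k⁻¹ * b)) := by
  refine inv_eq_of_mul_eq_one_right ?_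
  rw [affinePerm_mul, ← affinePerm_one]
  simp [← mul_assoc]

theorem affinePerm_pow (j : ℕ) : affinePerm k a b ^ j =
    affinePerm (k ^ j) ((∑ i ∈ Finset.range j, (k : ZMod m) ^ i) * a)
      ((∑ i ∈ Finset.range j, (k : ZMod m) ^ i) * b) := by
  induction j with
  | zero => simp [affinePerm_one]
  | succ j ih =>
    rw [pow_succ', ih, affinePerm_mul, geom_sum_succ, pow_succ']
    congr 1 <;> ring

theorem affinePerm_inj :
    affinePerm k a b = affinePerm k' a' b' ↔ k = k' ∧ a = a' ∧ b = b' := by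
  refine ⟨fun h ↦ ?_, by rintro ⟨rfl, rfl, rfl⟩; rfl⟩
  have ha := congrArg (· (r 0)) h
  have hb := congrArg (· (sr 0)) h
  have hk := congrArg (· (r 1)) h
  simp only [affinePerm_r, affinePerm_sr, mul_zero, mul_one, zero_add, r.injEq, sr.injEq]
    at ha hb hk
  rw [ha, add_left_inj] at hk
  exact ⟨Units.ext hk, ha, hb⟩

theorem affinePerm_eq_one_iff : affinePerm k a b = 1 ↔ k = 1 ∧ a = 0 ∧ b = 0 := by
  rw [← affinePerm_one, affinePerm_inj]

end affinePerm

def affineSubgroup (K : Subgroup (ZMod m)ˣ) (J : Ideal (ZMod m)) :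
    Subgroup (Equiv.Perm (DihedralGroup m)) where
  carrier := {f | ∃ k ∈ K, ∃ a ∈ J, ∃ b ∈ J, affinePerm k a b = f}
  mul_mem' := by
    rintro _ _ ⟨k, hk, a, ha, b, hb, rfl⟩ ⟨k', hk', a', ha', b', hb', rfl⟩
    exact ⟨_, mul_mem hk hk', _, add_mem (J.mul_mem_left _ ha') ha,
      _, add_mem (J.mul_mem_left _ hb') hb, (affinePerm_mul ..).symm⟩
  one_mem' := ⟨1, one_mem K, 0, J.zero_mem, 0, J.zero_mem, affinePerm_one⟩
  inv_mem' := by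
    rintro _ ⟨k, hk, a, ha, b, hb, rfl⟩
    exact ⟨_, inv_mem hk, _, J.neg_mem (J.mul_mem_left _ ha),
      _, J.neg_mem (J.mul_mem_left _ hb), (affinePerm_inv ..).symm⟩

section affineSubgroup

variable {K K' : Subgroup (ZMod m)ˣ} {J J' : Ideal (ZMod m)}

theorem affinePerm_mem_affineSubgroup {k : (ZMod m)ˣ} {a b : ZMod m} :
    affinePerm k a b ∈ affineSubgroup K J ↔ k ∈ K ∧ a ∈ J ∧ b ∈ J := by
  refine ⟨?_, fun ⟨hk, ha, hb⟩ ↦ ⟨k, hk, a, ha, b, hb, rfl⟩⟩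
  rintro ⟨k', hk', a', ha', b', hb', h⟩
  obtain ⟨rfl, rfl, rfl⟩ := (affinePerm_inj ..).mp h
  exact ⟨hk', ha', hb'⟩

theorem affineSubgroup_le_hol : affineSubgroup K J ≤ Hol (DihedralGroup m) := by
  rintro _ ⟨k, -, a, -, b, -, rfl⟩
  exact affinePerm_mem_hol k a b

theorem affineSubgroup_mono (hK : K ≤ K') (hJ : J ≤ J') :
    affineSubgroup K J ≤ affineSubgroup K' J' := by
  rintro _ ⟨k, hk, a, ha, b, hb, rfl⟩
  exact ⟨k, hK hk, a, hJ ha, b, hJ hb, rfl⟩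

theorem card_affineSubgroup :
    Nat.card (affineSubgroup K J) = Nat.card K * (Nat.card J * Nat.card J) := by
  rw [← Nat.card_prod, ← Nat.card_prod]
  refine (Nat.card_congr (Equiv.ofBijective
    (fun q : K × J × J ↦
      ⟨affinePerm q.1 q.2.1 q.2.2, q.1, q.1.2, q.2.1, q.2.1.2, q.2.2, q.2.2.2, rfl⟩)
    ⟨fun q q' h ↦ ?_, ?_⟩)).symm
  · obtain ⟨hk, ha, hb⟩ := (affinePerm_inj ..).mp (congrArg Subtype.val h)
    exact Prod.ext (Subtype.ext hk) (Prod.ext (Subtype.ext ha) (Subtype.ext hb))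
  · rintro ⟨_, k, hk, a, ha, b, hb, rfl⟩
    exact ⟨(⟨k, hk⟩, ⟨a, ha⟩, ⟨b, hb⟩), rfl⟩

end affineSubgroup

section PrimePower

variable {p n : ℕ} (h : p ∣ p ^ n)

theorem card_affineSubgroup_ker_top (hp : p.Prime) (hn : 1 ≤ n) :
    Nat.card (affineSubgroup (ZMod.unitsMap h).ker ⊤) = p ^ (3 * n - 1) := by
  rw [card_affineSubgroup, ZMod.card_ker_unitsMap_prime_pow h hp hn,
    Nat.card_congr Submodule.topEquiv.toEquiv, Nat.card_zmod, ← pow_add, ← pow_add]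
  congr 1
  omega

theorem card_affineSubgroup_ker_ker (hp : p.Prime) (hn : 1 ≤ n) :
    Nat.card (affineSubgroup (ZMod.unitsMap h).ker (RingHom.ker (ZMod.castHom h (ZMod p)))) =
      p ^ (3 * n - 3) := by
  rw [card_affineSubgroup, ZMod.card_ker_unitsMap_prime_pow h hp hn,
    ZMod.card_ker_castHom_prime_pow h hp hn, ← pow_add, ← pow_add]
  congr 1
  omega

theorem affinePerm_pow_eq_one_iff (hp : p.Prime) (hodd : Odd p) (hn : 1 ≤ n)
    {k : (ZMod (p ^ n))ˣ} (hk : k ∈ (ZMod.unitsMap h).ker) (a b : ZMod (p ^ n)) :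
    affinePerm k a b ^ p ^ (n - 1) = 1 ↔
      a ∈ RingHom.ker (ZMod.castHom h (ZMod p)) ∧
        b ∈ RingHom.ker (ZMod.castHom h (ZMod p)) := by
  have : NeZero (p ^ n) := ⟨pow_ne_zero n hp.ne_zero⟩
  have hkN : k ^ p ^ (n - 1) = 1 := by
    have := pow_card_eq_one' (x := (⟨k, hk⟩ : (ZMod.unitsMap h).ker))
    rw [ZMod.card_ker_unitsMap_prime_pow h hp hn] at this
    exact congrArg Subtype.val this
  rw [affinePerm_pow,
    ZMod.geom_sum_eq_prime_pow hodd hn (ZMod.dvd_sub_one_of_mem_ker_unitsMap h hk), hkN,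
    affinePerm_eq_one_iff, RingHom.mem_ker, RingHom.mem_ker,
    ZMod.castHom_eq_zero_iff_dvd_val, ZMod.castHom_eq_zero_iff_dvd_val,
    ZMod.pow_mul_eq_zero_iff_dvd_val hp.pos hn, ZMod.pow_mul_eq_zero_iff_dvd_val hp.pos hn]
  simp

theorem exists_subgroup_coe_eq_setOf_orderOf_le (hp : p.Prime) (hodd : Odd p) (hn : 1 ≤ n) :
    ∃ Q : Subgroup (affineSubgroup (ZMod.unitsMap h).ker ⊤),
      (Q : Set (affineSubgroup (ZMod.unitsMap h).ker ⊤)) = {x | orderOf x ≤ p ^ (n - 1)} ∧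
        Nat.card Q = p ^ (3 * n - 3) := by
  have : Fact p.Prime := ⟨hp⟩
  have hle : affineSubgroup (ZMod.unitsMap h).ker (RingHom.ker (ZMod.castHom h (ZMod p))) ≤
      affineSubgroup (ZMod.unitsMap h).ker ⊤ := affineSubgroup_mono le_rfl le_top
  have hpgroup := IsPGroup.of_card (card_affineSubgroup_ker_top h hp hn)
  refine ⟨_, ?_, (Nat.card_congr (Subgroup.subgroupOfEquivOfLe hle).toEquiv).trans
    (card_affineSubgroup_ker_ker h hp hn)⟩
  ext ⟨f, k, hk, a, -, b, -, rfl⟩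
  rw [SetLike.mem_coe, Subgroup.mem_subgroupOf, Set.mem_ofPred_eq, hpgroup.orderOf_le_pow_iff,
    affinePerm_mem_affineSubgroup, ← affinePerm_pow_eq_one_iff h hp hodd hn hk, Subtype.ext_iff]
  simp [hk]

theorem card_hol_prime_pow (hp : p.Prime) (hodd : Odd p) (hn : 1 ≤ n) :
    Nat.card (Hol (DihedralGroup (p ^ n))) = p ^ (3 * n - 1) * (2 * (p - 1)) := by
  have : NeZero (p ^ n) := ⟨pow_ne_zero n hp.ne_zero⟩
  have hne : p ^ n ≠ 2 := fun h2 ↦ Nat.not_odd_iff_even.mpr even_two (h2 ▸ hodd.pow)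
  rw [card_hol hne, Nat.totient_prime_pow hp hn, show 3 * n - 1 = (n - 1) + n + n by omega,
    pow_add, pow_add]
  ring

theorem card_affineSubgroup_subgroupOf_hol (hp : p.Prime) (hn : 1 ≤ n) :
    Nat.card ((affineSubgroup (ZMod.unitsMap h).ker ⊤).subgroupOf (Hol (DihedralGroup (p ^ n)))) =
      p ^ (3 * n - 1) :=
  (Nat.card_congr (Subgroup.subgroupOfEquivOfLe affineSubgroup_le_hol).toEquiv).trans
    (card_affineSubgroup_ker_top h hp hn)

theorem index_affineSubgroup_subgroupOf_hol (hp : p.Prime) (hodd : Odd p) (hn : 1 ≤ n) :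
    ((affineSubgroup (ZMod.unitsMap h).ker ⊤).subgroupOf (Hol (DihedralGroup (p ^ n)))).index =
      2 * (p - 1) := by
  have := Subgroup.card_mul_index
    ((affineSubgroup (ZMod.unitsMap h).ker ⊤).subgroupOf (Hol (DihedralGroup (p ^ n))))
  rw [card_affineSubgroup_subgroupOf_hol h hp hn, card_hol_prime_pow hp hodd hn] at this
  exact Nat.eq_of_mul_eq_mul_left (pow_pos hp.pos _) this

noncomputable def affineSylow (hp : p.Prime) (hodd : Odd p) (hn : 1 ≤ n) :
    Sylow p (Hol (DihedralGroup (p ^ n))) :=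
  have : Fact p.Prime := ⟨hp⟩
  (IsPGroup.of_card (card_affineSubgroup_subgroupOf_hol h hp hn)).toSylow
    (index_affineSubgroup_subgroupOf_hol h hp hodd hn ▸ hp.not_dvd_two_mul_sub_one hodd)

end PrimePower

end DihedralGroup

/-- A Sylow `p`-subgroup of the holomorph of `DihedralGroup (p ^ n)` (`p` an odd prime,
`n ≥ 1`) has order `p ^ (3n - 1)`, and its elements of order at most `p ^ (n-1)` form a
subgroup of order `p ^ (3n - 3)`. -/
theorem sylow_hol_dihedral (p n : ℕ) (hp : p.Prime) (hodd : Odd p) (hn : 1 ≤ n)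
    (P : Sylow p ↥(Hol (DihedralGroup (p ^ n)))) :
    Nat.card ↥P.toSubgroup = p ^ (3 * n - 1) ∧
    ∃ Q : Subgroup ↥P.toSubgroup,
      (Q : Set ↥P.toSubgroup) = {x : ↥P.toSubgroup | orderOf x ≤ p ^ (n - 1)} ∧
      Nat.card ↥Q = p ^ (3 * n - 3) := by
  have : Fact p.Prime := ⟨hp⟩
  have h : p ∣ p ^ n := dvd_pow_self p (by omega)
  let e := (Subgroup.subgroupOfEquivOfLe DihedralGroup.affineSubgroup_le_hol).symm.trans
    ((DihedralGroup.affineSylow h hp hodd hn).equiv P)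
  exact ⟨(Nat.card_congr e.toEquiv).symm.trans
      (DihedralGroup.card_affineSubgroup_ker_top h hp hn),
    e.exists_subgroup_coe_eq_setOf_orderOf_le
      (DihedralGroup.exists_subgroup_coe_eq_setOf_orderOf_le h hp hodd hn)⟩
end

section
/- Let p be an odd prime and n ≥ 1. The automorphism group of the dihedral group DihedralGroup(p^n) of order 2p^n has order p^(2n-1)(p-1). -/
/-!
An automorphism `φ` of `DihedralGroup m`, `m ≠ 2`, must send `r 1` (of order `m`) to a rotation
`r k` and `sr 0` to a reflection `sr a`; applying the same to `φ⁻¹` makes `k` a unit. As `r 1` and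
`sr 0` generate the group, `φ` is then the affine substitution `i ↦ a + k * i` on reflections, so
`Aut (DihedralGroup m) ≃ ZMod m × (ZMod m)ˣ` has `m * φ(m)` elements, which for `m = p ^ n` is
`p ^ n * p ^ (n - 1) * (p - 1)`.
-/

open DihedralGroup

namespace DihedralGroup

variable {m : ℕ}

def affineMulAut (a : ZMod m) (k : (ZMod m)ˣ) : MulAut (DihedralGroup m) where
  toFun
    | r i => r (k * i)
    | sr i => sr (a + k * i)
  invFun
    | r i => r (↑k⁻¹ * i)
    | sr i => sr (↑k⁻¹ * (i - a))
  left_inv x := by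
    rcases x with i | i <;> simp [← mul_assoc]
  right_inv x := by
    rcases x with i | i <;> simp [← mul_assoc, mul_sub]
  map_mul' x y := by
    rcases x with i | i <;> rcases y with j | j <;>
      simp only [r_mul_r, r_mul_sr, sr_mul_r, sr_mul_sr] <;> congr 1 <;> ring

@[simp]
lemma affineMulAut_r (a : ZMod m) (k : (ZMod m)ˣ) (i : ZMod m) :
    affineMulAut a k (r i) = r ((k : ZMod m) * i) := rfl

@[simp]
lemma affineMulAut_sr (a : ZMod m) (k : (ZMod m)ˣ) (i : ZMod m) :
    affineMulAut a k (sr i) = sr (a + (k : ZMod m) * i) := rfl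

lemma sr_eq_sr_zero_mul_r (i : ZMod m) : sr i = sr 0 * r i := by
  rw [sr_mul_r, zero_add]

lemma affineMulAut_injective :
    Function.Injective (fun x : ZMod m × (ZMod m)ˣ ↦ affineMulAut x.1 x.2) := by
  rintro ⟨a, k⟩ ⟨b, l⟩ (h : affineMulAut a k = affineMulAut b l)
  have hsr := DFunLike.congr_fun h (sr 0)
  have hr := DFunLike.congr_fun h (r 1)
  simp only [affineMulAut_sr, affineMulAut_r, mul_zero, add_zero, mul_one, sr.injEq,
    r.injEq] at hsr hr
  exact Prod.ext hsr (Units.ext hr)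

lemma exists_eq_r_of_orderOf_ne_two {x : DihedralGroup m} (hx : orderOf x ≠ 2) :
    ∃ i, x = r i := by
  rcases x with i | i
  · exact ⟨i, rfl⟩
  · exact absurd (orderOf_sr i) hx

lemma exists_map_r_one_eq_r (hm : m ≠ 2) (φ : MulAut (DihedralGroup m)) :
    ∃ c, φ (r 1) = r c :=
  exists_eq_r_of_orderOf_ne_two (by rwa [MulEquiv.orderOf_eq, orderOf_r_one])

lemma map_r_of_map_r_one_eq_r (φ : MulAut (DihedralGroup m)) {c : ZMod m}
    (hc : φ (r 1) = r c) (i : ZMod m) : φ (r i) = r (c * i) := by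
  have hi : r i = r 1 ^ (i.cast : ℤ) := by rw [r_one_zpow, ZMod.intCast_zmod_cast]
  rw [hi, map_zpow, hc, r_zpow, ZMod.intCast_zmod_cast]

-- `sr 0` and `r 1` generate the group, so if both landed among the rotations, so would all of `φ`.
lemma exists_map_sr_zero_eq_sr (φ : MulAut (DihedralGroup m)) {c : ZMod m}
    (hc : φ (r 1) = r c) : ∃ a, φ (sr 0) = sr a := by
  rcases hsr : φ (sr 0) with a | a
  · obtain ⟨y, hy⟩ := φ.surjective (sr 0)
    have hrot : ∀ x, ∃ j, φ x = r j := by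
      rintro (i | i)
      · exact ⟨c * i, map_r_of_map_r_one_eq_r φ hc i⟩
      · refine ⟨a + c * i, ?_⟩
        rw [sr_eq_sr_zero_mul_r, map_mul, hsr, map_r_of_map_r_one_eq_r φ hc, r_mul_r]
    obtain ⟨j, hj⟩ := hrot y
    exact absurd (hj.symm.trans hy) (by simp)
  · exact ⟨a, rfl⟩

lemma isUnit_of_map_r_one_eq_r (hm : m ≠ 2) (φ : MulAut (DihedralGroup m)) {c : ZMod m}
    (hc : φ (r 1) = r c) : IsUnit c := by
  obtain ⟨d, hd⟩ := exists_map_r_one_eq_r hm φ⁻¹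
  have : r 1 = r (c * d) := by
    rw [← map_r_of_map_r_one_eq_r φ hc, ← hd, MulAut.inv_apply, MulEquiv.apply_symm_apply]
  exact IsUnit.of_mul_eq_one d (r.inj this).symm

lemma affineMulAut_surjective (hm : m ≠ 2) :
    Function.Surjective (fun x : ZMod m × (ZMod m)ˣ ↦ affineMulAut x.1 x.2) := by
  intro φ
  obtain ⟨c, hc⟩ := exists_map_r_one_eq_r hm φ
  obtain ⟨a, ha⟩ := exists_map_sr_zero_eq_sr φ hc
  obtain ⟨k, rfl⟩ := isUnit_of_map_r_one_eq_r hm φ hc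
  refine ⟨(a, k), show affineMulAut a k = φ from MulEquiv.ext fun x ↦ ?_⟩
  rcases x with i | i
  · simp [map_r_of_map_r_one_eq_r φ hc]
  · rw [sr_eq_sr_zero_mul_r, map_mul φ, ha, map_r_of_map_r_one_eq_r φ hc, sr_mul_r]
    simp

noncomputable def affineMulAutEquiv (hm : m ≠ 2) :
    ZMod m × (ZMod m)ˣ ≃ MulAut (DihedralGroup m) :=
  Equiv.ofBijective _ ⟨affineMulAut_injective, affineMulAut_surjective hm⟩

lemma nat_card_mulAut (hm : m ≠ 2) : Nat.card (MulAut (DihedralGroup m)) = m * m.totient := by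
  rw [← Nat.card_congr (affineMulAutEquiv hm), Nat.card_prod, Nat.card_zmod]
  rcases eq_or_ne m 0 with rfl | hm0
  · simp
  · have : NeZero m := ⟨hm0⟩
    rw [Nat.card_eq_fintype_card, ZMod.card_units_eq_totient]

end DihedralGroup

/-- The automorphism group of the dihedral group of order `2 p ^ n` (`p` an odd prime,
`n ≥ 1`) has order `p ^ (2n - 1) * (p - 1)`. -/
theorem card_mulAut_dihedralGroup (p n : ℕ) (hp : p.Prime) (hodd : Odd p) (hn : 1 ≤ n) :
    Nat.card (MulAut (DihedralGroup (p ^ n))) = p ^ (2 * n - 1) * (p - 1) := by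
  have hpn : p ^ n ≠ 2 := fun h ↦ Nat.not_even_iff_odd.2 hodd.pow (h ▸ even_two)
  rw [nat_card_mulAut hpn, Nat.totient_prime_pow hp hn, ← mul_assoc, ← pow_add]
  congr 2
  omega
end

section
/- Let p be an odd prime. The automorphism group of the generalized dihedral group (C_p × C_p) ⋊ C_2 of order 2p^2 has order p^3 (p+1)(p-1)^2. -/
/-- The inversion automorphism of `C_p × C_p` (written multiplicatively). -/
def invAut (p : ℕ) : MulAut (Multiplicative (ZMod p × ZMod p)) :=
  MulEquiv.inv (Multiplicative (ZMod p × ZMod p))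

/-- The action of `C_2` on `C_p × C_p` by inversion. -/
def invHom (p : ℕ) : Multiplicative (ZMod 2) →* MulAut (Multiplicative (ZMod p × ZMod p)) where
  toFun g := invAut p ^ (Multiplicative.toAdd g).val
  map_one' := by simp
  map_mul' g h := by
    have h2 : invAut p ^ 2 = 1 := by
      refine MulEquiv.ext fun x => ?_
      simp [invAut, sq]
    show invAut p ^ (Multiplicative.toAdd (g * h)).val = _
    rw [toAdd_mul, ZMod.val_add, ← pow_add]
    exact (pow_eq_pow_mod _ h2).symm

/-- The generalized dihedral group `(C_p × C_p) ⋊ C_2`: the semidirect product of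
`C_p × C_p` (written multiplicatively) by the group of order 2 acting by inversion. -/
abbrev GenDihedral (p : ℕ) : Type :=
  SemidirectProduct (Multiplicative (ZMod p × ZMod p)) (Multiplicative (ZMod 2)) (invHom p)

/-!
Write `A = C_p × C_p` and `t` for the reflection `inr (ofAdd 1)`. Every element outside `A` is
an involution, so for odd `p` the subgroup `A` consists exactly of the solutions of `z ^ p = 1`
and every automorphism `φ` preserves it. Hence `φ` is determined by its restriction `σ ∈ Aut A`
and by `a ∈ A` with `φ t = a t`; conversely every pair `(σ, a)` defines an automorphism. So
`|Aut G| = |GL₂(𝔽_p)| · p ^ 2 = (p ^ 2 - 1)(p ^ 2 - p) p ^ 2`.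
-/

theorem card_linearEquiv_self_eq_prod {F V : Type*} [Field F] [Fintype F] [AddCommGroup V]
    [Module F V] [FiniteDimensional F V] {n : ℕ} (hn : Module.finrank F V = n) :
    Nat.card (V ≃ₗ[F] V) = ∏ i : Fin n, (Fintype.card F ^ n - Fintype.card F ^ (i : ℕ)) := by
  subst hn
  let e : V ≃ₗ[F] (Fin (Module.finrank F V) → F) := (Module.finBasis F V).equivFun
  rw [← Matrix.card_GL_field, Nat.card_congr (Matrix.GeneralLinearGroup.toLin.trans
    ((LinearMap.GeneralLinearGroup.congrLinearEquiv e.symm).trans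
      (LinearMap.GeneralLinearGroup.generalLinearEquiv F V))).toEquiv]

def AddAut.toZModLinearEquiv (n : ℕ) (V : Type*) [AddCommGroup V] [Module (ZMod n) V] :
    AddAut V ≃ (V ≃ₗ[ZMod n] V) where
  toFun e := e.toLinearEquiv (ZMod.map_smul e.toAddMonoidHom)
  invFun e := e.toAddEquiv
  left_inv _ := rfl
  right_inv _ := rfl

theorem card_mulAut_zmod_prod (p : ℕ) [Fact p.Prime] :
    Nat.card (MulAut (Multiplicative (ZMod p × ZMod p))) = (p ^ 2 - 1) * (p ^ 2 - p) := by
  rw [← Nat.card_congr AddEquiv.toMultiplicative, Nat.card_congr (AddAut.toZModLinearEquiv p _),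
    card_linearEquiv_self_eq_prod (n := 2) (by simp), Fin.prod_univ_two, ZMod.card]
  simp

open SemidirectProduct

lemma Multiplicative.ofAdd_one_mul_self :
    Multiplicative.ofAdd (1 : ZMod 2) * Multiplicative.ofAdd 1 = 1 := rfl

lemma Multiplicative.zmod_two_eq_one_or (r : Multiplicative (ZMod 2)) :
    r = 1 ∨ r = Multiplicative.ofAdd 1 := by
  have : ∀ a : ZMod 2, a = 0 ∨ a = 1 := by decide
  exact this (Multiplicative.toAdd r)

lemma invHom_ofAdd_one_apply {p : ℕ} (x : Multiplicative (ZMod p × ZMod p)) :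
    invHom p (Multiplicative.ofAdd 1) x = x⁻¹ := by
  change (invAut p ^ 1) x = x⁻¹
  rw [pow_one]
  rfl

namespace GenDihedral

variable {p : ℕ}

lemma mul_self_eq_one_of_right_ne_one {z : GenDihedral p} (hz : z.right ≠ 1) : z * z = 1 := by
  obtain ⟨x, r⟩ := z
  obtain rfl : r = Multiplicative.ofAdd 1 := (Multiplicative.zmod_two_eq_one_or r).resolve_left hz
  refine SemidirectProduct.ext ?_ ?_
  · simp [invHom_ofAdd_one_apply]
  · exact Multiplicative.ofAdd_one_mul_self

lemma pow_eq_one_of_right_eq_one {z : GenDihedral p} (hz : z.right = 1) : z ^ p = 1 := by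
  rw [← inl_left_mul_inr_right z, hz, map_one, mul_one, ← map_pow,
    show z.left ^ p = 1 from ZModModule.char_nsmul_eq_zero p (Multiplicative.toAdd z.left), map_one]

lemma pow_eq_one_iff_right_eq_one (hp : Odd p) {z : GenDihedral p} : z ^ p = 1 ↔ z.right = 1 := by
  refine ⟨fun h => ?_, pow_eq_one_of_right_eq_one⟩
  by_contra hz
  have : z ^ p = z := by
    obtain ⟨k, rfl⟩ := hp
    rw [pow_succ, pow_mul, sq, mul_self_eq_one_of_right_ne_one hz, one_pow, one_mul]
  rw [this] at h
  exact hz (by simp [h])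

lemma right_map_eq_one_iff (hp : Odd p) (φ : MulAut (GenDihedral p)) {z : GenDihedral p} :
    (φ z).right = 1 ↔ z.right = 1 := by
  rw [← pow_eq_one_iff_right_eq_one hp, ← pow_eq_one_iff_right_eq_one hp, ← map_pow,
    map_eq_one_iff _ φ.injective]

lemma inl_left_map_inl (hp : Odd p) (φ : MulAut (GenDihedral p))
    (x : Multiplicative (ZMod p × ZMod p)) : inl (φ (inl x)).left = φ (inl x) := by
  conv_rhs =>
    rw [← inl_left_mul_inr_right (φ (inl x)), (right_map_eq_one_iff hp φ).2 (right_inl x)]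
  simp

lemma right_map_inr_ofAdd_one (hp : Odd p) (φ : MulAut (GenDihedral p)) :
    (φ (inr (Multiplicative.ofAdd 1))).right = Multiplicative.ofAdd 1 := by
  refine (Multiplicative.zmod_two_eq_one_or _).resolve_left fun h => ?_
  exact absurd ((right_map_eq_one_iff hp φ).1 h) (by rw [right_inr]; decide)

@[simps apply]
def restrictAut (hp : Odd p) (φ : MulAut (GenDihedral p)) :
    MulAut (Multiplicative (ZMod p × ZMod p)) where
  toFun x := (φ (inl x)).left
  invFun x := (φ.symm (inl x)).left
  left_inv x := by simp [inl_left_map_inl hp]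
  right_inv x := by simp [inl_left_map_inl hp]
  map_mul' x y := by
    rw [map_mul, map_mul, mul_left, (right_map_eq_one_iff hp φ).2 (right_inl x), map_one,
      MulAut.one_apply]

def extendAut (σ : MulAut (Multiplicative (ZMod p × ZMod p)))
    (a : Multiplicative (ZMod p × ZMod p)) : MulAut (GenDihedral p) where
  toFun z := ⟨σ z.left * a ^ (Multiplicative.toAdd z.right).val, z.right⟩
  invFun z := ⟨σ.symm (z.left * (a ^ (Multiplicative.toAdd z.right).val)⁻¹), z.right⟩
  left_inv z := by simp
  right_inv z := by simp
  map_mul' z w := by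
    obtain ⟨x, r⟩ := z
    obtain ⟨y, s⟩ := w
    refine SemidirectProduct.ext ?_ rfl
    rcases Multiplicative.zmod_two_eq_one_or r with rfl | rfl <;>
      rcases Multiplicative.zmod_two_eq_one_or s with rfl | rfl <;>
      simp [invHom_ofAdd_one_apply, ZMod.val_one'', Multiplicative.ofAdd_one_mul_self, mul_comm,
        mul_assoc, mul_left_comm]

@[simp]
lemma extendAut_inl (σ : MulAut (Multiplicative (ZMod p × ZMod p)))
    (a x : Multiplicative (ZMod p × ZMod p)) : extendAut σ a (inl x) = inl (σ x) := by
  ext1 <;> simp [extendAut]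

lemma extendAut_inr_ofAdd_one (σ : MulAut (Multiplicative (ZMod p × ZMod p)))
    (a : Multiplicative (ZMod p × ZMod p)) :
    extendAut σ a (inr (Multiplicative.ofAdd 1)) = ⟨a, Multiplicative.ofAdd 1⟩ := by
  ext1 <;> simp [extendAut, ZMod.val_one'']

def mulAutEquivProd (hp : Odd p) :
    MulAut (GenDihedral p) ≃
      MulAut (Multiplicative (ZMod p × ZMod p)) × Multiplicative (ZMod p × ZMod p) where
  toFun φ := (restrictAut hp φ, (φ (inr (Multiplicative.ofAdd 1))).left)
  invFun σa := extendAut σa.1 σa.2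
  left_inv φ := by
    refine MulEquiv.toMonoidHom_injective (SemidirectProduct.hom_ext ?_ ?_)
    · refine MonoidHom.ext fun x => ?_
      simp [inl_left_map_inl hp]
    · refine MonoidHom.ext fun r => ?_
      rcases Multiplicative.zmod_two_eq_one_or r with rfl | rfl
      · simp
      · simp only [MonoidHom.comp_apply, MulEquiv.coe_toMonoidHom, extendAut_inr_ofAdd_one]
        exact SemidirectProduct.ext rfl (right_map_inr_ofAdd_one hp φ).symm
  right_inv σa := Prod.ext (MulEquiv.ext fun x => by simp) (by simp [extendAut_inr_ofAdd_one])

end GenDihedral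

/-- The automorphism group of the generalized dihedral group `(C_p × C_p) ⋊ C_2` of order
`2 p ^ 2` (`p` an odd prime) has order `p ^ 3 (p+1) (p-1) ^ 2`. -/
theorem card_mulAut_genDihedral (p : ℕ) (hp : p.Prime) (hodd : Odd p) :
    Nat.card (MulAut (GenDihedral p)) = p ^ 3 * (p + 1) * (p - 1) ^ 2 := by
  have := Fact.mk hp
  rw [Nat.card_congr (GenDihedral.mulAutEquivProd hodd), Nat.card_prod, card_mulAut_zmod_prod,
    Nat.card_congr Multiplicative.toAdd, Nat.card_prod, Nat.card_zmod]
  zify [hp.one_le, Nat.one_le_pow 2 p hp.pos, Nat.le_self_pow two_ne_zero p]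
  ring
end

section
/- Let p be an odd prime. Every Sylow p-subgroup of the holomorph Hol(ZMod p × ZMod (2p)) has order p^3, is nonabelian, and has exponent p (it is isomorphic to the Heisenberg group of order p^3). -/
/-!
Write `X = ℤ/p × ℤ/2p ≅ (ℤ/p)² × ℤ/2`. Conjugation on the normal subgroup `λ(X)` of `Hol X` has
kernel `λ(X)` (as `X` is abelian), so `|Hol X|` divides `|X| · |Aut X|`; and since the two factors
have coprime orders, `Aut X ≅ Aut((ℤ/p)²) × Aut(ℤ/2) ≅ GL₂(𝔽_p)`. Hence the `p`-part of `|Hol X|`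
is at most `p³`. On the other hand the affine maps `(a, b, c) ↦ (a + u + w b, b + v, c)` normalise
the translations of `(ℤ/p)² × ℤ/2` and form a Heisenberg group of order `p³`, which is nonabelian
and has exponent `p` because `p ∣ p.choose 2` for odd `p`. It is therefore a Sylow `p`-subgroup,
and every Sylow `p`-subgroup is isomorphic to it.
-/

open Equiv Function Multiplicative

theorem Hol.map_permCongrHom {X Y : Type*} [Group X] [Group Y] (e : X ≃* Y) :
    (Hol X).map e.toEquiv.permCongrHom.toMonoidHom = Hol Y := by
  have h : e.toEquiv.permCongrHom.toMonoidHom.comp (MulAction.toPermHom X X) =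
      (MulAction.toPermHom Y Y).comp e.toMonoidHom := by
    ext x y
    simp [Equiv.permCongr_apply]
  rw [Hol, Subgroup.map_equiv_normalizer_eq, ← MonoidHom.range_comp, h, MonoidHom.range_comp,
    e.toMonoidHom.range_eq_top.mpr e.surjective, ← MonoidHom.range_eq_map, Hol]

def Hol.congr {X Y : Type*} [Group X] [Group Y] (e : X ≃* Y) : Hol X ≃* Hol Y :=
  (e.toEquiv.permCongrHom.subgroupMap (Hol X)).trans
    (MulEquiv.subgroupCongr (Hol.map_permCongrHom e))

theorem Hol.card_dvd {X : Type*} [CommGroup X] :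
    Nat.card (Hol X) ∣ Nat.card X * Nat.card (MulAut X) := by
  set N := (MulAction.toPermHom X X).range.subgroupOf (Hol X)
  have : N.Normal := Subgroup.normal_in_normalizer
  have eN : N ≃* X := (Subgroup.subgroupOfEquivOfLe Subgroup.le_normalizer).trans
    (MonoidHom.ofInjective MulAction.toPerm_injective).symm
  have hker : (MulAut.conjNormal (H := N)).ker ≤ N := by
    intro σ hσ
    -- commuting with every left translation makes `σ` the right translation by `σ 1`
    refine ⟨σ.1 1, Equiv.ext fun x => ?_⟩
    have hx : σ * (MulAction.toPermHom X X x) = (MulAction.toPermHom X X x) * σ := by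
      have h := DFunLike.congr_fun (MonoidHom.mem_ker.mp hσ)
        ⟨⟨_, Subgroup.le_normalizer ⟨x, rfl⟩⟩, ⟨x, rfl⟩⟩
      rw [Subtype.ext_iff, MulAut.conjNormal_apply, Subtype.ext_iff] at h
      simpa [mul_inv_eq_iff_eq_mul] using h
    simpa [mul_comm] using (congrArg (· 1) hx).symm
  rw [← (MulAut.conjNormal (H := N)).ker.card_mul_index, Subgroup.index_ker,
    ← Nat.card_congr eN.toEquiv, ← Nat.card_congr (MulAut.congr eN).toEquiv]
  exact mul_dvd_mul (Subgroup.card_dvd_of_le hker) (Subgroup.card_subgroup_dvd_card _)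

theorem Sylow.nonempty_mulEquiv_of_injective {G K : Type*} [Group G] [Finite G] [Group K]
    {p n m : ℕ} [Fact p.Prime] (f : K →* G) (hf : Injective f) (hK : Nat.card K = p ^ n)
    (hG : Nat.card G ∣ p ^ n * m) (hm : ¬ p ∣ m) (P : Sylow p G) : Nonempty (P ≃* K) := by
  have eK : K ≃* f.range := MonoidHom.ofInjective hf
  have hcard : Nat.card f.range = p ^ n := by rw [← Nat.card_congr eK.toEquiv, hK]
  have hindex : ¬ p ∣ f.range.index := by
    have h : p ^ n * f.range.index = Nat.card G := by rw [← hcard, Subgroup.card_mul_index]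
    exact fun hp => hm (hp.trans (Nat.dvd_of_mul_dvd_mul_left (pow_pos (Fact.out : p.Prime).pos n)
      (h ▸ hG)))
  exact ⟨(P.equiv ((IsPGroup.of_card hcard).toSylow hindex)).trans eK.symm⟩

section CoprimeProduct

variable {M N F : Type*} [AddCommGroup M] [AddCommGroup N]
  [FunLike F (M × N) (M × N)] [AddMonoidHomClass F (M × N) (M × N)]

theorem map_inl_eq_of_coprime (hMN : (Nat.card M).Coprime (Nat.card N)) (f : F) (m : M) :
    f (m, 0) = ((f (m, 0)).1, 0) := by
  refine Prod.ext rfl (hMN.symm.nsmul_right_bijective.injective ?_)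
  rw [smul_zero, ← Prod.smul_snd, ← map_nsmul, Prod.smul_mk, card_nsmul_eq_zero', smul_zero,
    Prod.mk_zero_zero, map_zero, Prod.snd_zero]

theorem map_inr_eq_of_coprime (hMN : (Nat.card M).Coprime (Nat.card N)) (f : F) (n : N) :
    f (0, n) = (0, (f (0, n)).2) := by
  refine Prod.ext (hMN.nsmul_right_bijective.injective ?_) rfl
  rw [smul_zero, ← Prod.smul_fst, ← map_nsmul, Prod.smul_mk, card_nsmul_eq_zero', smul_zero,
    Prod.mk_zero_zero, map_zero, Prod.fst_zero]

variable [Finite M] [Finite N]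

noncomputable def AddAut.restrictFst (hMN : (Nat.card M).Coprime (Nat.card N))
    (f : AddAut (M × N)) : AddAut M :=
  AddEquiv.ofBijective ((AddMonoidHom.fst M N).comp ((f : M × N →+ M × N).comp (.inl M N)))
    (Finite.injective_iff_bijective.mp fun m m' h => by
      have h' : f (m, 0) = f (m', 0) := by
        rw [map_inl_eq_of_coprime hMN f, map_inl_eq_of_coprime hMN f m']
        exact congrArg (·, (0 : N)) h
      exact congrArg Prod.fst (f.injective h'))

noncomputable def AddAut.restrictSnd (hMN : (Nat.card M).Coprime (Nat.card N))
    (f : AddAut (M × N)) : AddAut N :=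
  AddEquiv.ofBijective ((AddMonoidHom.snd M N).comp ((f : M × N →+ M × N).comp (.inr M N)))
    (Finite.injective_iff_bijective.mp fun n n' h => by
      have h' : f (0, n) = f (0, n') := by
        rw [map_inr_eq_of_coprime hMN f, map_inr_eq_of_coprime hMN f n']
        exact congrArg ((0 : M), ·) h
      exact congrArg Prod.snd (f.injective h'))

theorem AddAut.card_prod_of_coprime (hMN : (Nat.card M).Coprime (Nat.card N)) :
    Nat.card (AddAut (M × N)) = Nat.card (AddAut M) * Nat.card (AddAut N) := by
  rw [← Nat.card_prod]
  refine (Nat.card_eq_of_bijective (fun g : AddAut M × AddAut N => g.1.prodCongr g.2)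
    ⟨fun g g' h => ?_, fun f => ⟨(restrictFst hMN f, restrictSnd hMN f), ?_⟩⟩).symm
  · have h1 (m : M) : g.1 m = g'.1 m := congrArg Prod.fst (DFunLike.congr_fun h (m, 0))
    have h2 (n : N) : g.2 n = g'.2 n := congrArg Prod.snd (DFunLike.congr_fun h (0, n))
    exact Prod.ext (AddEquiv.ext h1) (AddEquiv.ext h2)
  · ext ⟨m, n⟩ : 1
    change (restrictFst hMN f m, restrictSnd hMN f n) = f (m, n)
    have hsplit : f (m, n) = f (m, 0) + f (0, n) := by
      rw [← map_add, Prod.mk_add_mk, add_zero, zero_add]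
    rw [hsplit, map_inl_eq_of_coprime hMN f, map_inr_eq_of_coprime hMN f]
    exact Prod.ext (add_zero _).symm (zero_add _).symm

end CoprimeProduct

theorem ZMod.card_addAut_pi (p n : ℕ) [Fact p.Prime] :
    Nat.card (AddAut (Fin n → ZMod p)) = ∏ i : Fin n, (p ^ n - p ^ (i : ℕ)) := by
  let toLinear : AddAut (Fin n → ZMod p) ≃ ((Fin n → ZMod p) ≃ₗ[ZMod p] (Fin n → ZMod p)) :=
    ⟨fun f => f.toLinearEquiv (ZMod.map_smul f), LinearEquiv.toAddEquiv, fun _ => rfl,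
      fun _ => rfl⟩
  rw [Nat.card_congr (toLinear.trans
      ((LinearMap.GeneralLinearGroup.generalLinearEquiv _ _).symm.trans
        Matrix.GeneralLinearGroup.toLin.symm).toEquiv),
    Matrix.card_GL_field, ZMod.card]

theorem ZMod.card_addAut_prod_self (p : ℕ) [Fact p.Prime] :
    Nat.card (AddAut (ZMod p × ZMod p)) = (p ^ 2 - 1) * (p ^ 2 - p) := by
  rw [Nat.card_congr
      (AddAut.congr (LinearEquiv.finTwoArrow (ZMod p) (ZMod p)).toAddEquiv.symm).toEquiv,
    ZMod.card_addAut_pi, Fin.prod_univ_two]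
  simp

theorem ZMod.card_addAut_two : Nat.card (AddAut (ZMod 2)) = 1 := by
  rw [Nat.card_congr (ZMod.AddAutEquivUnits 2).toEquiv, Nat.card_congr Additive.toMul,
    Nat.card_eq_fintype_card, ZMod.card_units_eq_totient, Nat.totient_two]

section Heisenberg

variable {R N : Type*} [CommRing R]

/-- The action of the unitriangular matrix `!![1, w, u; 0, 1, v; 0, 0, 1]` on `(a, b, 1)`. -/
def heisenbergPerm (u w v : R) : Perm (Multiplicative ((R × R) × N)) where
  toFun x := ofAdd ((x.toAdd.1.1 + u + w * x.toAdd.1.2, x.toAdd.1.2 + v), x.toAdd.2)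
  invFun x := ofAdd ((x.toAdd.1.1 - w * (x.toAdd.1.2 - v) - u, x.toAdd.1.2 - v), x.toAdd.2)
  left_inv x := by simp
  right_inv x := by simp

@[simp]
theorem heisenbergPerm_apply (u w v : R) (x : Multiplicative ((R × R) × N)) :
    heisenbergPerm u w v x =
      ofAdd ((x.toAdd.1.1 + u + w * x.toAdd.1.2, x.toAdd.1.2 + v), x.toAdd.2) :=
  rfl

theorem heisenbergPerm_mul (u w v u' w' v' : R) :
    (heisenbergPerm u w v * heisenbergPerm u' w' v' : Perm (Multiplicative ((R × R) × N))) =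
      heisenbergPerm (u + u' + w * v') (w + w') (v + v') := by
  ext x <;> simp <;> ring

theorem heisenbergPerm_zero : (heisenbergPerm 0 0 0 : Perm (Multiplicative ((R × R) × N))) = 1 := by
  ext x <;> simp

theorem heisenbergPerm_inv (u w v : R) :
    (heisenbergPerm u w v : Perm (Multiplicative ((R × R) × N)))⁻¹ =
      heisenbergPerm (-u + w * v) (-w) (-v) := by
  refine inv_eq_of_mul_eq_one_right ?_
  rw [heisenbergPerm_mul, ← heisenbergPerm_zero]
  congr 1 <;> ring

theorem heisenbergPerm_pow (u w v : R) (n : ℕ) :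
    (heisenbergPerm u w v : Perm (Multiplicative ((R × R) × N))) ^ n =
      heisenbergPerm (n * u + n.choose 2 * (w * v)) (n * w) (n * v) := by
  induction n with
  | zero => simp [heisenbergPerm_zero]
  | succ n ih =>
    rw [pow_succ, ih, heisenbergPerm_mul, Nat.choose_succ_succ', Nat.choose_one_right]
    push_cast
    congr 1 <;> ring

theorem heisenbergPerm_inj [Nonempty N] {u w v u' w' v' : R} :
    (heisenbergPerm u w v : Perm (Multiplicative ((R × R) × N))) = heisenbergPerm u' w' v' ↔
      u = u' ∧ w = w' ∧ v = v' := by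
  refine ⟨fun h => ?_, by rintro ⟨rfl, rfl, rfl⟩; rfl⟩
  obtain ⟨n⟩ := ‹Nonempty N›
  have h0 := congrArg toAdd (DFunLike.congr_fun h (ofAdd ((0, 0), n)))
  have h1 := congrArg toAdd (DFunLike.congr_fun h (ofAdd ((0, 1), n)))
  simp only [heisenbergPerm_apply, toAdd_ofAdd, zero_add, mul_zero, add_zero, mul_one,
    Prod.mk.injEq, and_true] at h0 h1
  obtain ⟨rfl, rfl⟩ := h0
  exact ⟨rfl, add_left_cancel h1.1, rfl⟩

variable (R N) in
def heisenbergSubgroup : Subgroup (Perm (Multiplicative ((R × R) × N))) where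
  carrier := Set.range fun t : R × R × R => heisenbergPerm t.1 t.2.1 t.2.2
  mul_mem' := by
    rintro _ _ ⟨⟨u, w, v⟩, rfl⟩ ⟨⟨u', w', v'⟩, rfl⟩
    exact ⟨⟨_, _, _⟩, (heisenbergPerm_mul u w v u' w' v').symm⟩
  one_mem' := ⟨0, heisenbergPerm_zero⟩
  inv_mem' := by
    rintro _ ⟨⟨u, w, v⟩, rfl⟩
    exact ⟨⟨_, _, _⟩, (heisenbergPerm_inv u w v).symm⟩

theorem card_heisenbergSubgroup [Nonempty N] :
    Nat.card (heisenbergSubgroup R N) = Nat.card R ^ 3 := by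
  refine (Nat.card_range_of_injective fun t t' h => ?_).trans ?_
  · obtain ⟨h1, h2, h3⟩ := heisenbergPerm_inj.mp h
    exact Prod.ext h1 (Prod.ext h2 h3)
  · rw [Nat.card_prod, Nat.card_prod]
    ring

theorem heisenbergSubgroup_nonabelian [Nontrivial R] [Nonempty N] :
    ∃ a b : heisenbergSubgroup R N, a * b ≠ b * a := by
  refine ⟨⟨_, ⟨(0, 1, 0), rfl⟩⟩, ⟨_, ⟨(0, 0, 1), rfl⟩⟩, fun h => ?_⟩
  have h' := congrArg Subtype.val h
  simp [heisenbergPerm_mul, heisenbergPerm_inj] at h'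

theorem heisenbergSubgroup_pow_eq_one {p : ℕ} [CharP R p] (hp : p.Prime) (hodd : Odd p)
    (g : heisenbergSubgroup R N) : g ^ p = 1 := by
  obtain ⟨_, ⟨u, w, v⟩, rfl⟩ := g
  have hchoose : ((p.choose 2 : ℕ) : R) = 0 := (CharP.cast_eq_zero_iff R p _).mpr
    (hp.dvd_choose_self two_ne_zero (hp.two_le.lt_of_ne (hodd.ne_two_of_dvd_nat dvd_rfl).symm))
  ext1
  simp [heisenbergPerm_pow, hchoose, heisenbergPerm_zero]

theorem exponent_heisenbergSubgroup [Nonempty N] {p : ℕ} [CharP R p] (hp : p.Prime)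
    (hodd : Odd p) : Monoid.exponent (heisenbergSubgroup R N) = p := by
  have : Nontrivial R := CharP.nontrivial_of_char_ne_one hp.one_lt.ne'
  refine ((Nat.dvd_prime hp).mp (Monoid.exponent_dvd_of_forall_pow_eq_one
    (heisenbergSubgroup_pow_eq_one hp hodd))).resolve_left fun h => ?_
  obtain ⟨a, b, hab⟩ := heisenbergSubgroup_nonabelian (R := R) (N := N)
  have := Monoid.exp_eq_one_iff.mp h
  exact hab (Subsingleton.elim _ _)

variable [AddCommGroup N]

theorem heisenbergPerm_mul_toPerm (u w v : R) (g : Multiplicative ((R × R) × N)) :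
    heisenbergPerm u w v * MulAction.toPermHom _ (Multiplicative ((R × R) × N)) g =
      MulAction.toPermHom _ (Multiplicative ((R × R) × N))
        (ofAdd ((g.toAdd.1.1 + w * g.toAdd.1.2, g.toAdd.1.2), g.toAdd.2)) *
          heisenbergPerm u w v := by
  ext x <;> simp <;> ring

theorem heisenbergSubgroup_le_hol :
    heisenbergSubgroup R N ≤ Hol (Multiplicative ((R × R) × N)) := by
  refine Subgroup.le_normalizer_iff.mpr ?_
  rintro _ ⟨⟨u, w, v⟩, rfl⟩ _ ⟨g, rfl⟩
  exact ⟨_, by rw [heisenbergPerm_mul_toPerm, mul_inv_cancel_right]⟩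

end Heisenberg

section HolZModProd

variable {p : ℕ}

def ZMod.prodTwoMulEquiv (hodd : Odd p) : ZMod p × ZMod (2 * p) ≃+ (ZMod p × ZMod p) × ZMod 2 :=
  let crt := (ZMod.chineseRemainder (Nat.coprime_two_left.mpr hodd)).toAddEquiv
  ((AddEquiv.refl _).prodCongr (crt.trans AddEquiv.prodComm)).trans AddEquiv.prodAssoc.symm

theorem card_mulAut_zmod_prod_two_mul [Fact p.Prime] (hodd : Odd p) :
    Nat.card (MulAut (Multiplicative (ZMod p × ZMod (2 * p)))) = (p ^ 2 - 1) * (p ^ 2 - p) := by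
  have hcop : (Nat.card (ZMod p × ZMod p)).Coprime (Nat.card (ZMod 2)) := by
    simpa [Nat.card_zmod] using hodd.mul hodd
  rw [Nat.card_congr AddEquiv.toMultiplicative.symm,
    Nat.card_congr (AddAut.congr (ZMod.prodTwoMulEquiv hodd)).toEquiv,
    AddAut.card_prod_of_coprime hcop, ZMod.card_addAut_prod_self, ZMod.card_addAut_two, mul_one]

theorem card_hol_zmod_prod_two_mul_dvd [Fact p.Prime] (hodd : Odd p) :
    Nat.card (Hol (Multiplicative (ZMod p × ZMod (2 * p)))) ∣
      p ^ 3 * (2 * (p - 1) ^ 2 * (p + 1)) := by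
  have hp : p.Prime := Fact.out
  refine Hol.card_dvd.trans (dvd_of_eq ?_)
  rw [card_mulAut_zmod_prod_two_mul hodd, Nat.card_congr toAdd, Nat.card_prod, Nat.card_zmod,
    Nat.card_zmod]
  have h1 : 1 ≤ p := hp.one_le
  have h2 : 1 ≤ p ^ 2 := Nat.one_le_pow _ _ hp.pos
  have h3 : p ≤ p ^ 2 := Nat.le_self_pow two_ne_zero p
  zify [h1, h2, h3]
  ring

theorem Nat.Prime.not_dvd_two_mul_sub_one_sq_mul_add_one {p : ℕ} (hp : p.Prime) (hodd : Odd p) :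
    ¬ p ∣ 2 * (p - 1) ^ 2 * (p + 1) := by
  rw [hp.dvd_mul, hp.dvd_mul]
  rintro ((h | h) | h)
  · exact hodd.ne_two_of_dvd_nat dvd_rfl ((Nat.prime_dvd_prime_iff_eq hp Nat.prime_two).mp h)
  · have := Nat.le_of_dvd (Nat.sub_pos_of_lt hp.one_lt) (hp.dvd_of_dvd_pow h)
    have := hp.pos
    omega
  · exact hp.one_lt.ne' (Nat.dvd_one.mp ((Nat.dvd_add_right dvd_rfl).mp h))

end HolZModProd

/-- Every Sylow `p`-subgroup of `Hol(ZMod p × ZMod (2p))` (`p` an odd prime) has order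
`p ^ 3`, is nonabelian, and has exponent `p` (it is a Heisenberg group of order `p ^ 3`). -/
theorem sylow_hol_abelian_type (p : ℕ) (hp : p.Prime) (hodd : Odd p)
    (P : Sylow p ↥(Hol (Multiplicative (ZMod p × ZMod (2 * p))))) :
    Nat.card ↥P.toSubgroup = p ^ 3 ∧
    (∃ a b : ↥P.toSubgroup, a * b ≠ b * a) ∧
    Monoid.exponent ↥P.toSubgroup = p := by
  have : Fact p.Prime := ⟨hp⟩
  have hcard : Nat.card (heisenbergSubgroup (ZMod p) (ZMod 2)) = p ^ 3 := by
    rw [card_heisenbergSubgroup, Nat.card_zmod]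
  obtain ⟨e⟩ := Sylow.nonempty_mulEquiv_of_injective
    ((Hol.congr (ZMod.prodTwoMulEquiv hodd).toMultiplicative.symm).toMonoidHom.comp
      (Subgroup.inclusion heisenbergSubgroup_le_hol))
    ((Hol.congr _).injective.comp (Subgroup.inclusion_injective _)) hcard
    (card_hol_zmod_prod_two_mul_dvd hodd) (hp.not_dvd_two_mul_sub_one_sq_mul_add_one hodd) P
  refine ⟨(Nat.card_congr e.toEquiv).trans hcard, ?_,
    (Monoid.exponent_eq_of_mulEquiv e).trans (exponent_heisenbergSubgroup hp hodd)⟩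
  obtain ⟨a, b, hab⟩ := heisenbergSubgroup_nonabelian (R := ZMod p) (N := ZMod 2)
  exact ⟨e.symm a, e.symm b, fun h => hab (by simpa using congrArg e h)⟩
end
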